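/- arXiv:2602.13428 — 3 statements merged into one kernel-verified Lean document; each statement's English description precedes it below -/
import Mathlib

section
/- Let d ≥ 3, let T be the d-regular rooted tree and let Q, P be subgroups of Sym(d) with 1 ≠ Q normal in P and Q acting transitively on {1,…,d}. Then G_Q^P is a closed, self-similar subgroup of Aut(T) that is regular branch over its first level stabilizer St_{G_Q^P}(1), and its Hausdorff dimension equals ℋ(G_Q^P) = log|Q| / log(d!); in particular ℋ(G_Q^P) > 0. -/
open Filter Polynomial

namespace TreePaper

/-- Vertices of the regular rooted tree over alphabet `X`: finite words. -/
abbrev V (X : Type*) := List X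

variable {X : Type*}

/-- A permutation of the vertex set fixes the root and preserves adjacency
(sends children of `v` to children of the image of `v`). -/
def IsTreeHom (g : Equiv.Perm (V X)) : Prop :=
  g [] = [] ∧ ∀ (v : V X) (a : X), ∃ b : X, g (v ++ [a]) = g v ++ [b]

lemma IsTreeHom.mul {g h : Equiv.Perm (V X)} (hg : IsTreeHom g) (hh : IsTreeHom h) :
    IsTreeHom (g * h) := by
  constructor
  · simp only [Equiv.Perm.mul_apply, hh.1, hg.1]
  · intro v a
    obtain ⟨b, hb⟩ := hh.2 v a
    obtain ⟨c, hc⟩ := hg.2 (h v) b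
    exact ⟨c, by simp only [Equiv.Perm.mul_apply, hb, hc]⟩

lemma IsTreeHom.one : IsTreeHom (1 : Equiv.Perm (V X)) :=
  ⟨rfl, fun _ a => ⟨a, rfl⟩⟩

/-- The automorphism group of the regular rooted tree with alphabet `X`,
realized as a subgroup of the permutations of the vertex set. -/
def AutT (X : Type*) : Subgroup (Equiv.Perm (V X)) where
  carrier := {g | IsTreeHom g ∧ IsTreeHom g⁻¹}
  one_mem' := ⟨IsTreeHom.one, by rw [inv_one]; exact IsTreeHom.one⟩
  mul_mem' := by
    intro a b ha hb
    exact ⟨ha.1.mul hb.1, by rw [mul_inv_rev]; exact hb.2.mul ha.2⟩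
  inv_mem' := by
    intro a ha
    exact ⟨ha.2, by rw [inv_inv]; exact ha.1⟩

/-- Restriction of the action of `g` to the `n`-th level of the tree. -/
def res (n : ℕ) (g : Equiv.Perm (V X)) : {v : V X // v.length = n} → V X :=
  fun v => g v.1

/-- `π_n(G)`: the set of actions of elements of `G` on the `n`-th level
(equivalently, on the first `n` levels). -/
def piSet (G : Set (Equiv.Perm (V X))) (n : ℕ) : Set ({v : V X // v.length = n} → V X) :=
  res n '' G

/-- The elements of `π_n(G)` fixing at least one vertex of level `n`. -/
def fixSet (G : Set (Equiv.Perm (V X))) (n : ℕ) :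
    Set ({v : V X // v.length = n} → V X) :=
  {f | f ∈ piSet G n ∧ ∃ v : {v : V X // v.length = n}, f v = v.1}

/-- The sequence `p_n` whose limit is the fixed-point proportion `FPP(G)`. -/
noncomputable def FPPseq (G : Set (Equiv.Perm (V X))) (n : ℕ) : ℝ :=
  ((fixSet G n).ncard : ℝ) / ((piSet G n).ncard : ℝ)

/-- Hausdorff dimension of a subgroup (or subset) of `Aut(T)`. -/
noncomputable def hausdorffDim (G : Set (Equiv.Perm (V X))) : ℝ :=
  Filter.liminf (fun n : ℕ =>
    Real.log ((piSet G n).ncard) /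
      Real.log ((piSet (AutT X : Set (Equiv.Perm (V X))) n).ncard)) Filter.atTop

/-- `σ` is the label `g|_v^1` of `g` at the vertex `v`. -/
def HasLabel (g : Equiv.Perm (V X)) (v : V X) (σ : Equiv.Perm X) : Prop :=
  ∀ a : X, g (v ++ [a]) = g v ++ [σ a]

/-- The (generalized) iterated wreath product `W_S` of a set `S` of permutations:
all tree automorphisms all of whose labels lie in `S`. -/
def WS (S : Set (Equiv.Perm X)) : Set (Equiv.Perm (V X)) :=
  {g | g ∈ AutT X ∧ ∀ v : V X, ∃ σ ∈ S, HasLabel g v σ}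

/-- The group `G_Q^P`: tree automorphisms whose labels lie in `P` and any two of
whose labels lie in the same coset of `Q`. -/
def GQP (Q P : Subgroup (Equiv.Perm X)) : Set (Equiv.Perm (V X)) :=
  {g | g ∈ AutT X ∧ (∀ v : V X, ∃ σ ∈ P, HasLabel g v σ) ∧
    ∀ (v w : V X) (σ τ : Equiv.Perm X), HasLabel g v σ → HasLabel g w τ → σ * τ⁻¹ ∈ Q}

/-- `G` acts transitively on every level of the tree. -/
def LevelTransitive (G : Set (Equiv.Perm (V X))) : Prop :=
  ∀ v w : V X, v.length = w.length → ∃ g ∈ G, g v = w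

/-- The section (as a function) of `g` at the vertex `v`. -/
def sectionMap (g : Equiv.Perm (V X)) (v : V X) : V X → V X :=
  fun w => (g (v ++ w)).drop v.length

/-- `G` is self-similar: all sections of elements of `G` belong to `G`. -/
def SelfSimilar (G : Set (Equiv.Perm (V X))) : Prop :=
  ∀ g ∈ G, ∀ v : V X, ∃ h ∈ G, ∀ w : V X, h w = sectionMap g v w

/-- `K` has finite index in `G` (finitely many left cosets of `K` cover `G`). -/
def FiniteIndexIn (K G : Set (Equiv.Perm (V X))) : Prop :=
  ∃ F : Finset (Equiv.Perm (V X)), ∀ g ∈ G, ∃ t ∈ F, ∃ k ∈ K, g = t * k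

/-- The geometric product `K_1`: elements of the first level stabilizer all of whose
first-level sections lie in `K`. -/
def geomProd (K : Set (Equiv.Perm (V X))) : Set (Equiv.Perm (V X)) :=
  {g | g ∈ AutT X ∧ (∀ a : X, g [a] = [a]) ∧
    ∀ a : X, ∃ h ∈ K, ∀ w : V X, h w = sectionMap g [a] w}

/-- `G` is regular branch over `K`. -/
def RegularBranchOver (G K : Set (Equiv.Perm (V X))) : Prop :=
  LevelTransitive G ∧ K ⊆ G ∧ geomProd K ⊆ K ∧
    FiniteIndexIn (geomProd K) K ∧ FiniteIndexIn K G

/-- `G` is regular branch (over some subgroup). -/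
def RegularBranch (G : Set (Equiv.Perm (V X))) : Prop :=
  ∃ K : Set (Equiv.Perm (V X)), RegularBranchOver G K

/-- `G` is closed in `Aut(T)` for the profinite topology. -/
def IsClosedSub (G : Set (Equiv.Perm (V X))) : Prop :=
  ∀ g ∈ AutT X, (∀ n : ℕ, ∃ h ∈ G, res n h = res n g) → g ∈ G

/-- `D_S(k)`: the number of permutations in `S` fixing exactly `k` points. -/
def DS {d : ℕ} (S : Finset (Equiv.Perm (Fin d))) (k : ℕ) : ℕ :=
  (S.filter fun σ => (Finset.univ.filter fun x => σ x = x).card = k).card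

/-- The characteristic polynomial `f_S` of a set of permutations `S`. -/
noncomputable def charPoly {d : ℕ} (S : Finset (Equiv.Perm (Fin d))) : Polynomial ℝ :=
  ∑ k ∈ Finset.Icc 1 d,
    Polynomial.C ((DS S k : ℝ) / (S.card : ℝ)) * (1 - (1 - Polynomial.X) ^ k)


/-! ### Auxiliary infrastructure -/

section Infra

theorem _root_.Equiv.Perm.inv_apply_self {α : Type*} (f : Equiv.Perm α) (x : α) : f⁻¹ (f x) = x :=
  f.symm_apply_apply x

theorem _root_.Equiv.Perm.apply_inv_self {α : Type*} (f : Equiv.Perm α) (x : α) : f (f⁻¹ x) = x :=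
  f.apply_symm_apply x

lemma IsTreeHom.length_apply {g : Equiv.Perm (V X)} (hg : IsTreeHom g) (v : V X) :
    (g v).length = v.length := by
  induction v using List.reverseRecOn with
  | nil => simp [hg.1]
  | append_singleton v a ih =>
    obtain ⟨b, hb⟩ := hg.2 v a
    simp [hb, ih]

lemma IsTreeHom.exists_append {g : Equiv.Perm (V X)} (hg : IsTreeHom g) (v w : V X) :
    ∃ u : V X, g (v ++ w) = g v ++ u := by
  induction w using List.reverseRecOn with
  | nil => exact ⟨[], by simp⟩
  | append_singleton w a ih =>
    obtain ⟨u, hu⟩ := ih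
    obtain ⟨b, hb⟩ := hg.2 (v ++ w) a
    exact ⟨u ++ [b], by rw [← List.append_assoc, hb, hu, List.append_assoc]⟩

lemma IsTreeHom.apply_append {g : Equiv.Perm (V X)} (hg : IsTreeHom g) (v w : V X) :
    g (v ++ w) = g v ++ sectionMap g v w := by
  obtain ⟨u, hu⟩ := hg.exists_append v w
  have : sectionMap g v w = u := by
    rw [sectionMap, hu, ← hg.length_apply v, List.drop_left]
  rw [this, hu]

lemma IsTreeHom.drop_apply_append {g : Equiv.Perm (V X)} (hg : IsTreeHom g) (v l : V X) :
    (g v ++ l).drop v.length = l := by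
  rw [← hg.length_apply v, List.drop_left]

lemma HasLabel.unique {g : Equiv.Perm (V X)} {v : V X} {σ τ : Equiv.Perm X}
    (h1 : HasLabel g v σ) (h2 : HasLabel g v τ) : σ = τ := by
  ext a
  have := (h1 a).symm.trans (h2 a)
  have := List.append_cancel_left this
  simpa using this

lemma exists_hasLabel {g : Equiv.Perm (V X)} (hg : g ∈ AutT X) (v : V X) :
    ∃ σ : Equiv.Perm X, HasLabel g v σ := by
  classical
  have hfor : ∀ a : X, ∃ b, g (v ++ [a]) = g v ++ [b] := hg.1.2 v
  have hback : ∀ b : X, ∃ a, g⁻¹ (g v ++ [b]) = v ++ [a] := by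
    intro b
    obtain ⟨a, ha⟩ := hg.2.2 (g v) b
    refine ⟨a, ?_⟩
    rw [ha]
    congr 1
    exact g.inv_apply_self v
  choose f hf using hfor
  choose f' hf' using hback
  refine ⟨⟨f, f', ?_, ?_⟩, hf⟩
  · intro a
    have h1 : g⁻¹ (g v ++ [f a]) = v ++ [f' (f a)] := hf' (f a)
    rw [← hf a] at h1
    have h2 : g⁻¹ (g (v ++ [a])) = v ++ [a] := g.inv_apply_self _
    rw [h2] at h1
    have := List.append_cancel_left h1
    simpa using this.symm
  · intro b
    have h1 : g⁻¹ (g v ++ [b]) = v ++ [f' b] := hf' b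
    have h2 : g (v ++ [f' b]) = g v ++ [f (f' b)] := hf (f' b)
    rw [← h1] at h2
    have h3 : g (g⁻¹ (g v ++ [b])) = g v ++ [b] := g.apply_inv_self _
    rw [h3] at h2
    have := List.append_cancel_left h2.symm
    simpa using this

lemma HasLabel.comp {g h : Equiv.Perm (V X)} {v : V X} {σ τ : Equiv.Perm X}
    (hh : HasLabel h v σ) (hgl : HasLabel g (h v) τ) : HasLabel (g * h) v (τ * σ) := by
  intro a
  simp only [Equiv.Perm.mul_apply, hh a, hgl (σ a)]

lemma HasLabel.inv {g : Equiv.Perm (V X)} {v : V X} {σ : Equiv.Perm X}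
    (hl : HasLabel g v σ) : HasLabel g⁻¹ (g v) σ⁻¹ := by
  intro b
  have : g (v ++ [σ⁻¹ b]) = g v ++ [b] := by
    rw [hl (σ⁻¹ b)]
    simp
  have h2 : g⁻¹ (g v ++ [b]) = v ++ [σ⁻¹ b] := by
    rw [← this]; exact g.inv_apply_self _
  rw [h2]
  congr 1
  exact (g.inv_apply_self v).symm

/-- The label of `g` at `v`, as a permutation (defined by choice). -/
noncomputable def labelPerm (g : Equiv.Perm (V X)) (v : V X) : Equiv.Perm X := by
  classical exact if h : ∃ σ : Equiv.Perm X, HasLabel g v σ then h.choose else 1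

lemma hasLabel_labelPerm {g : Equiv.Perm (V X)} (hg : g ∈ AutT X) (v : V X) :
    HasLabel g v (labelPerm g v) := by
  classical
  have h : ∃ σ : Equiv.Perm X, HasLabel g v σ := exists_hasLabel hg v
  rw [labelPerm]
  simp only [dif_pos h]
  exact h.choose_spec

lemma HasLabel.labelPerm_eq {g : Equiv.Perm (V X)} {v : V X} {σ : Equiv.Perm X}
    (hg : g ∈ AutT X) (h : HasLabel g v σ) : labelPerm g v = σ :=
  (hasLabel_labelPerm hg v).unique h

/-! ### Portraits -/

/-- Auxiliary: portrait applied to a reversed word. -/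
def portraitAux (c : V X → Equiv.Perm X) : List X → List X
  | [] => []
  | a :: r => c r.reverse a :: portraitAux c r

/-- The tree map with given labels. -/
def portraitFun (c : V X → Equiv.Perm X) (w : V X) : V X :=
  (portraitAux c w.reverse).reverse

/-- Auxiliary: inverse portrait applied to a reversed word. -/
def portraitInvAux (c : V X → Equiv.Perm X) : List X → List X
  | [] => []
  | b :: r => ((c (portraitInvAux c r).reverse)⁻¹ b) :: portraitInvAux c r

/-- The inverse tree map with given labels. -/
def portraitInvFun (c : V X → Equiv.Perm X) (z : V X) : V X :=
  (portraitInvAux c z.reverse).reverse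

lemma portraitFun_nil (c : V X → Equiv.Perm X) : portraitFun c [] = [] := rfl

lemma portraitInvFun_nil (c : V X → Equiv.Perm X) : portraitInvFun c [] = [] := rfl

lemma portraitFun_concat (c : V X → Equiv.Perm X) (v : V X) (a : X) :
    portraitFun c (v ++ [a]) = portraitFun c v ++ [c v a] := by
  simp [portraitFun, portraitAux]

lemma portraitInvFun_concat (c : V X → Equiv.Perm X) (z : V X) (b : X) :
    portraitInvFun c (z ++ [b]) = portraitInvFun c z ++ [(c (portraitInvFun c z))⁻¹ b] := by
  simp [portraitInvFun, portraitInvAux]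

lemma portraitInv_portrait (c : V X → Equiv.Perm X) (w : V X) :
    portraitInvFun c (portraitFun c w) = w := by
  induction w using List.reverseRecOn with
  | nil => rfl
  | append_singleton v a ih =>
    rw [portraitFun_concat, portraitInvFun_concat, ih]
    simp

lemma portrait_portraitInv (c : V X → Equiv.Perm X) (z : V X) :
    portraitFun c (portraitInvFun c z) = z := by
  induction z using List.reverseRecOn with
  | nil => rfl
  | append_singleton v b ih =>
    rw [portraitInvFun_concat, portraitFun_concat, ih]
    simp

/-- The tree automorphism with given labels. -/
def portraitEquiv (c : V X → Equiv.Perm X) : Equiv.Perm (V X) :=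
  ⟨portraitFun c, portraitInvFun c, portraitInv_portrait c, portrait_portraitInv c⟩

lemma portraitEquiv_apply (c : V X → Equiv.Perm X) (w : V X) :
    portraitEquiv c w = portraitFun c w := rfl

lemma portraitEquiv_inv_apply (c : V X → Equiv.Perm X) (z : V X) :
    (portraitEquiv c)⁻¹ z = portraitInvFun c z := rfl

lemma portraitEquiv_mem_AutT (c : V X → Equiv.Perm X) : portraitEquiv c ∈ AutT X := by
  refine ⟨⟨rfl, fun v a => ⟨c v a, portraitFun_concat c v a⟩⟩,
    ⟨rfl, fun z b => ⟨(c (portraitInvFun c z))⁻¹ b, portraitInvFun_concat c z b⟩⟩⟩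

lemma hasLabel_portraitEquiv (c : V X → Equiv.Perm X) (v : V X) :
    HasLabel (portraitEquiv c) v (c v) :=
  fun a => portraitFun_concat c v a

/-! ### Sections -/

lemma sectionMap_nil {g : Equiv.Perm (V X)} (hg : IsTreeHom g) (v : V X) :
    sectionMap g v [] = [] := by
  simp only [sectionMap, List.append_nil]
  rw [List.drop_eq_nil_iff]
  exact le_of_eq (hg.length_apply v)

lemma sectionMap_concat {g : Equiv.Perm (V X)} (hg : IsTreeHom g) (v u : V X) {a : X}
    {σ : Equiv.Perm X} (hl : HasLabel g (v ++ u) σ) :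
    sectionMap g v (u ++ [a]) = sectionMap g v u ++ [σ a] := by
  have h1 : g (v ++ (u ++ [a])) = g (v ++ u) ++ [σ a] := by
    rw [← List.append_assoc]; exact hl a
  have h2 : g (v ++ u) = g v ++ sectionMap g v u := hg.apply_append v u
  rw [sectionMap, h1, h2, List.append_assoc]
  exact hg.drop_apply_append v _

/-- The section of `g` at `v` as a permutation of the tree. -/
def sectionPerm (g : Equiv.Perm (V X)) (hg : g ∈ AutT X) (v : V X) : Equiv.Perm (V X) where
  toFun := sectionMap g v
  invFun := sectionMap g⁻¹ (g v)
  left_inv := by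
    intro w
    show (g⁻¹ (g v ++ sectionMap g v w)).drop (g v).length = w
    rw [← hg.1.apply_append v w, g.inv_apply_self, hg.1.length_apply v, List.drop_left]
  right_inv := by
    intro z
    show (g (v ++ sectionMap g⁻¹ (g v) z)).drop v.length = z
    have h1 : g⁻¹ (g v ++ z) = v ++ sectionMap g⁻¹ (g v) z := by
      have := hg.2.apply_append (g v) z
      rwa [g.inv_apply_self] at this
    rw [← h1, g.apply_inv_self, ← hg.1.length_apply v, List.drop_left]

lemma sectionPerm_apply {g : Equiv.Perm (V X)} (hg : g ∈ AutT X) (v w : V X) :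
    sectionPerm g hg v w = sectionMap g v w := rfl

lemma sectionPerm_mem_AutT {g : Equiv.Perm (V X)} (hg : g ∈ AutT X) (v : V X) :
    sectionPerm g hg v ∈ AutT X := by
  constructor
  · refine ⟨sectionMap_nil hg.1 v, fun u a => ?_⟩
    obtain ⟨σ, hσ⟩ := exists_hasLabel hg (v ++ u)
    exact ⟨σ a, sectionMap_concat hg.1 v u hσ⟩
  · have hinv : ∀ z, (sectionPerm g hg v)⁻¹ z = sectionMap g⁻¹ (g v) z := fun z => rfl
    constructor
    · rw [hinv]; exact sectionMap_nil hg.2 (g v)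
    · intro u a
      obtain ⟨σ, hσ⟩ := exists_hasLabel (inv_mem hg) (g v ++ u)
      refine ⟨σ a, ?_⟩
      rw [hinv, hinv]
      exact sectionMap_concat hg.2 (g v) u hσ

lemma hasLabel_sectionPerm {g : Equiv.Perm (V X)} (hg : g ∈ AutT X) (v u : V X)
    {σ : Equiv.Perm X} (hl : HasLabel g (v ++ u) σ) :
    HasLabel (sectionPerm g hg v) u σ :=
  fun a => sectionMap_concat hg.1 v u hl

/-! ### Group properties of `G_Q^P` -/

section GQPProps

variable {Q P : Subgroup (Equiv.Perm X)}

lemma GQP_mul_mem (hnorm : ∀ p ∈ P, ∀ q ∈ Q, p * q * p⁻¹ ∈ Q)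
    {g h : Equiv.Perm (V X)} (hg : g ∈ GQP Q P) (hh : h ∈ GQP Q P) :
    g * h ∈ GQP Q P := by
  obtain ⟨hgA, hgP, hgQ⟩ := hg
  obtain ⟨hhA, hhP, hhQ⟩ := hh
  refine ⟨mul_mem hgA hhA, ?_, ?_⟩
  · intro v
    obtain ⟨σ, hσP, hσ⟩ := hhP v
    obtain ⟨τ, hτP, hτ⟩ := hgP (h v)
    exact ⟨τ * σ, mul_mem hτP hσP, hσ.comp hτ⟩
  · intro v w α β hα hβ
    obtain ⟨σ₁, hσ₁P, hσ₁⟩ := hhP v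
    obtain ⟨τ₁, hτ₁P, hτ₁⟩ := hgP (h v)
    obtain ⟨σ₂, hσ₂P, hσ₂⟩ := hhP w
    obtain ⟨τ₂, hτ₂P, hτ₂⟩ := hgP (h w)
    have hα' : α = τ₁ * σ₁ := hα.unique (hσ₁.comp hτ₁)
    have hβ' : β = τ₂ * σ₂ := hβ.unique (hσ₂.comp hτ₂)
    have h1 : σ₁ * σ₂⁻¹ ∈ Q := hhQ v w σ₁ σ₂ hσ₁ hσ₂
    have h2 : τ₁ * τ₂⁻¹ ∈ Q := hgQ (h v) (h w) τ₁ τ₂ hτ₁ hτ₂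
    have h3 : τ₁ * (σ₁ * σ₂⁻¹) * τ₁⁻¹ ∈ Q := hnorm τ₁ hτ₁P _ h1
    have h4 : (τ₁ * (σ₁ * σ₂⁻¹) * τ₁⁻¹) * (τ₁ * τ₂⁻¹) ∈ Q := mul_mem h3 h2
    have : α * β⁻¹ = (τ₁ * (σ₁ * σ₂⁻¹) * τ₁⁻¹) * (τ₁ * τ₂⁻¹) := by
      rw [hα', hβ']; group
    rwa [this]

lemma GQP_inv_mem (hnorm : ∀ p ∈ P, ∀ q ∈ Q, p * q * p⁻¹ ∈ Q)
    {g : Equiv.Perm (V X)} (hg : g ∈ GQP Q P) : g⁻¹ ∈ GQP Q P := by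
  obtain ⟨hgA, hgP, hgQ⟩ := hg
  have hlab : ∀ v : V X, ∃ σ ∈ P, HasLabel g (g⁻¹ v) σ ∧ HasLabel g⁻¹ v σ⁻¹ := by
    intro v
    obtain ⟨σ, hσP, hσ⟩ := hgP (g⁻¹ v)
    refine ⟨σ, hσP, hσ, ?_⟩
    have := hσ.inv
    rwa [g.apply_inv_self] at this
  refine ⟨inv_mem hgA, ?_, ?_⟩
  · intro v
    obtain ⟨σ, hσP, _, hσinv⟩ := hlab v
    exact ⟨σ⁻¹, inv_mem hσP, hσinv⟩
  · intro v w α β hα hβ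
    obtain ⟨σ, hσP, hσ, hσinv⟩ := hlab v
    obtain ⟨τ, hτP, hτ, hτinv⟩ := hlab w
    have hα' : α = σ⁻¹ := hα.unique hσinv
    have hβ' : β = τ⁻¹ := hβ.unique hτinv
    have h1 : τ * σ⁻¹ ∈ Q := hgQ (g⁻¹ w) (g⁻¹ v) τ σ hτ hσ
    have h2 : σ⁻¹ * (τ * σ⁻¹) * (σ⁻¹)⁻¹ ∈ Q := hnorm σ⁻¹ (inv_mem hσP) _ h1
    have : α * β⁻¹ = σ⁻¹ * (τ * σ⁻¹) * (σ⁻¹)⁻¹ := by rw [hα', hβ']; group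
    rwa [this]

lemma mem_GQP_of_labels_Q (hQP : Q ≤ P) {g : Equiv.Perm (V X)} (hg : g ∈ AutT X)
    (hlab : ∀ (v : V X) (σ : Equiv.Perm X), HasLabel g v σ → σ ∈ Q) : g ∈ GQP Q P := by
  refine ⟨hg, ?_, ?_⟩
  · intro v
    obtain ⟨σ, hσ⟩ := exists_hasLabel hg v
    exact ⟨σ, hQP (hlab v σ hσ), hσ⟩
  · intro v w σ τ hσ hτ
    exact mul_mem (hlab v σ hσ) (inv_mem (hlab w τ hτ))

/-- Elements of the first level stabilizer of `G_Q^P` have root label `1` and all labels in `Q`. -/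
lemma stab_labels_mem_Q {g : Equiv.Perm (V X)} (hg : g ∈ GQP Q P)
    (hfix : ∀ a : X, g [a] = [a]) :
    HasLabel g [] 1 ∧ ∀ (v : V X) (σ : Equiv.Perm X), HasLabel g v σ → σ ∈ Q := by
  have hroot : HasLabel g [] 1 := by
    intro a
    show g [a] = g [] ++ [a]
    rw [hfix a, hg.1.1.1]
    rfl
  refine ⟨hroot, fun v σ hσ => ?_⟩
  have := hg.2.2 v [] σ 1 hσ hroot
  simpa using this

end GQPProps

/-! ### Determination by finite levels -/

section Res

variable [Inhabited X]

lemma apply_eq_of_res_eq {g h : Equiv.Perm (V X)} (hg : g ∈ AutT X) (hh : h ∈ AutT X)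
    {n : ℕ} (hres : res n g = res n h) {v : V X} (hv : v.length ≤ n) : g v = h v := by
  set w : V X := List.replicate (n - v.length) default with hw
  have hlen : (v ++ w).length = n := by
    simp [hw, Nat.add_sub_cancel' hv]
  have key : g (v ++ w) = h (v ++ w) := congrFun hres ⟨v ++ w, hlen⟩
  have h1 : (g (v ++ w)).take v.length = g v := by
    rw [hg.1.apply_append v w, ← hg.1.length_apply v, List.take_left]
  have h2 : (h (v ++ w)).take v.length = h v := by
    rw [hh.1.apply_append v w, ← hh.1.length_apply v, List.take_left]
  rw [← h1, ← h2, key]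

lemma hasLabel_of_res_eq {g h : Equiv.Perm (V X)} (hg : g ∈ AutT X) (hh : h ∈ AutT X)
    {n : ℕ} (hres : res n g = res n h) {v : V X} (hv : v.length + 1 ≤ n)
    {σ : Equiv.Perm X} (hl : HasLabel g v σ) : HasLabel h v σ := by
  intro a
  have h1 : h (v ++ [a]) = g (v ++ [a]) := by
    refine (apply_eq_of_res_eq hg hh hres ?_).symm
    simp [hv]
  have h2 : h v = g v :=
    (apply_eq_of_res_eq hg hh hres (le_trans (Nat.le_succ _) hv)).symm
  rw [h1, h2, hl a]

lemma eq_on_of_labels_eq {g h : Equiv.Perm (V X)} (hg : g ∈ AutT X) (hh : h ∈ AutT X)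
    {n : ℕ} (hlab : ∀ v : V X, v.length < n → ∀ σ : Equiv.Perm X,
      HasLabel g v σ → HasLabel h v σ) :
    ∀ v : V X, v.length ≤ n → g v = h v := by
  intro v
  induction v using List.reverseRecOn with
  | nil => intro _; rw [hg.1.1, hh.1.1]
  | append_singleton v a ih =>
    intro hv
    have hvlen : v.length + 1 ≤ n := by simpa using hv
    obtain ⟨σ, hσ⟩ := exists_hasLabel hg v
    have hσh : HasLabel h v σ := hlab v hvlen σ hσ
    rw [hσ a, hσh a, ih (le_trans (Nat.le_succ _) hvlen)]

end Res

/-! ### The structural properties of `G_Q^P` -/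

section Structural

variable {Q P : Subgroup (Equiv.Perm X)}

lemma isClosedSub_GQP [Inhabited X] : IsClosedSub (GQP Q P) := by
  intro g hg happrox
  refine ⟨hg, ?_, ?_⟩
  · intro v
    obtain ⟨h, hhG, hres⟩ := happrox (v.length + 1)
    obtain ⟨σ, hσP, hσ⟩ := hhG.2.1 v
    exact ⟨σ, hσP, hasLabel_of_res_eq hhG.1 hg hres (le_refl _) hσ⟩
  · intro v w σ τ hσ hτ
    obtain ⟨h, hhG, hres⟩ := happrox (max v.length w.length + 1)
    have hσ' : HasLabel h v σ :=
      hasLabel_of_res_eq hg hhG.1 hres.symm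
        (Nat.add_le_add_right (le_max_left _ _) 1) hσ
    have hτ' : HasLabel h w τ :=
      hasLabel_of_res_eq hg hhG.1 hres.symm
        (Nat.add_le_add_right (le_max_right _ _) 1) hτ
    exact hhG.2.2 v w σ τ hσ' hτ'

lemma selfSimilar_GQP : SelfSimilar (GQP Q P) := by
  intro g hgG v
  have hgA : g ∈ AutT X := hgG.1
  refine ⟨sectionPerm g hgA v, ⟨sectionPerm_mem_AutT hgA v, ?_, ?_⟩, fun w => rfl⟩
  · intro u
    obtain ⟨σ, hσP, hσ⟩ := hgG.2.1 (v ++ u)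
    exact ⟨σ, hσP, hasLabel_sectionPerm hgA v u hσ⟩
  · intro u u' σ τ hσ hτ
    obtain ⟨σ', hσ'⟩ := exists_hasLabel hgA (v ++ u)
    obtain ⟨τ', hτ'⟩ := exists_hasLabel hgA (v ++ u')
    have h1 : σ = σ' := hσ.unique (hasLabel_sectionPerm hgA v u hσ')
    have h2 : τ = τ' := hτ.unique (hasLabel_sectionPerm hgA v u' hτ')
    rw [h1, h2]
    exact hgG.2.2 (v ++ u) (v ++ u') σ' τ' hσ' hτ'

lemma portraitFun_cons (c : V X → Equiv.Perm X) (x : X) (u : V X) :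
    portraitFun c (x :: u) = c [] x :: portraitFun (fun w => c (x :: w)) u := by
  induction u using List.reverseRecOn with
  | nil => rfl
  | append_singleton u a ih =>
    have h1 : x :: (u ++ [a]) = (x :: u) ++ [a] := rfl
    rw [h1, portraitFun_concat, ih, portraitFun_concat]
    rfl

lemma exists_portrait_mapsto (hQtrans : ∀ x y : X, ∃ σ ∈ Q, σ x = y) :
    ∀ v w : V X, v.length = w.length →
      ∃ c : V X → Equiv.Perm X, (∀ u, c u ∈ Q) ∧ portraitFun c v = w := by
  classical
  intro v
  induction v with
  | nil =>
    intro w hw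
    have : w = [] := List.eq_nil_of_length_eq_zero hw.symm
    exact ⟨fun _ => 1, fun _ => one_mem Q, by rw [this]; rfl⟩
  | cons a v' ih =>
    intro w hw
    match w with
    | [] => simp at hw
    | b :: w' =>
      obtain ⟨σ, hσQ, hσ⟩ := hQtrans a b
      obtain ⟨c', hc'Q, hc'⟩ := ih w' (by simpa using hw)
      refine ⟨fun u => match u with
        | [] => σ
        | x :: t => if x = a then c' t else 1, fun u => ?_, ?_⟩
      · match u with
        | [] => exact hσQ
        | x :: t =>
          by_cases h : x = a
          · simp [h]; exact hc'Q t
          · simp [h]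
      · rw [portraitFun_cons]
        show σ a :: portraitFun (fun t => if a = a then c' t else 1) v' = b :: w'
        rw [hσ]
        congr 1
        have he : (fun t : V X => if a = a then c' t else 1) = c' := by funext t; simp
        rw [he, hc']

lemma levelTransitive_GQP (hQP : Q ≤ P) (hQtrans : ∀ x y : X, ∃ σ ∈ Q, σ x = y) :
    LevelTransitive (GQP Q P) := by
  intro v w hvw
  obtain ⟨c, hcQ, hc⟩ := exists_portrait_mapsto hQtrans v w hvw
  refine ⟨portraitEquiv c, ?_, hc⟩
  refine mem_GQP_of_labels_Q hQP (portraitEquiv_mem_AutT c) ?_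
  intro u σ hσ
  have : σ = c u := hσ.unique (hasLabel_portraitEquiv c u)
  rw [this]; exact hcQ u

lemma geomProd_subset_stab (hQP : Q ≤ P) :
    geomProd {g ∈ GQP Q P | ∀ a : X, g [a] = [a]} ⊆
      {g ∈ GQP Q P | ∀ a : X, g [a] = [a]} := by
  rintro g ⟨hgA, hfix, hsec⟩
  refine ⟨?_, hfix⟩
  refine mem_GQP_of_labels_Q hQP hgA ?_
  intro v σ hσ
  match v with
  | [] =>
    have : σ = 1 := by
      ext a
      have h1 : g [a] = [σ a] := by
        have := hσ a
        simpa [hgA.1.1] using this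
      rw [hfix a] at h1
      simpa using h1.symm
    rw [this]; exact one_mem Q
  | x :: u =>
    obtain ⟨h, hK, hfun⟩ := hsec x
    have hlabh : HasLabel h u σ := by
      intro a
      have h1 : sectionMap g [x] (u ++ [a]) = sectionMap g [x] u ++ [σ a] :=
        sectionMap_concat hgA.1 [x] u (by simpa using hσ)
      rw [hfun, hfun, h1]
    exact (stab_labels_mem_Q hK.1 hK.2).2 u σ hlabh

end Structural

/-! ### Finite index -/

/-- The label assignment which is `f` on the first level and trivial elsewhere. -/
def levelOneLabels (f : X → Equiv.Perm X) : V X → Equiv.Perm X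
  | [a] => f a
  | _ => 1

lemma levelOneLabels_nil (f : X → Equiv.Perm X) : levelOneLabels f [] = 1 := rfl

lemma levelOneLabels_single (f : X → Equiv.Perm X) (a : X) :
    levelOneLabels f [a] = f a := rfl

lemma levelOneLabels_of_ne (f : X → Equiv.Perm X) {v : V X} (hv : v.length ≠ 1) :
    levelOneLabels f v = 1 := by
  match v with
  | [] => rfl
  | [a] => exact absurd rfl hv
  | a :: b :: t => rfl

section FinIndex

variable {Q P : Subgroup (Equiv.Perm X)}

lemma finiteIndex_stab_GQP [Fintype X] [DecidableEq X]
    (hnorm : ∀ p ∈ P, ∀ q ∈ Q, p * q * p⁻¹ ∈ Q) :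
    FiniteIndexIn {g ∈ GQP Q P | ∀ a : X, g [a] = [a]} (GQP Q P) := by
  classical
  refine ⟨Finset.image (fun σ : Equiv.Perm X => portraitEquiv (fun _ => σ))
    (Set.toFinset (P : Set (Equiv.Perm X))), ?_⟩
  intro g hgG
  obtain ⟨σ, hσP, hσ⟩ := hgG.2.1 []
  set t := portraitEquiv (fun _ : V X => σ) with ht
  have htG : t ∈ GQP Q P := by
    refine ⟨portraitEquiv_mem_AutT _, fun v => ⟨σ, hσP, hasLabel_portraitEquiv _ v⟩, ?_⟩
    intro v w α β hα hβ
    have hα' : α = σ := hα.unique (hasLabel_portraitEquiv _ v)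
    have hβ' : β = σ := hβ.unique (hasLabel_portraitEquiv _ w)
    rw [hα', hβ']
    simpa using one_mem Q
  refine ⟨t, ?_, t⁻¹ * g, ⟨?_, ?_⟩, by group⟩
  · exact Finset.mem_image.2 ⟨σ, Set.mem_toFinset.2 hσP, rfl⟩
  · exact GQP_mul_mem hnorm (GQP_inv_mem hnorm htG) hgG
  · intro a
    have h1 : g [a] = [σ a] := by
      have := hσ a
      simpa [hgG.1.1.1] using this
    have h2 : t [a] = [σ a] := by
      have := portraitFun_concat (fun _ : V X => σ) [] a
      simpa [ht, portraitEquiv_apply, portraitFun_nil] using this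
    show t⁻¹ (g [a]) = [a]
    rw [h1, ← h2, t.inv_apply_self]

lemma finiteIndex_geomProd_stab [Fintype X] [DecidableEq X] (hQP : Q ≤ P) :
    FiniteIndexIn (geomProd {g ∈ GQP Q P | ∀ a : X, g [a] = [a]})
      {g ∈ GQP Q P | ∀ a : X, g [a] = [a]} := by
  classical
  refine ⟨Finset.image (fun f : X → Equiv.Perm X => portraitEquiv (levelOneLabels f))
    Finset.univ, ?_⟩
  rintro g ⟨hgG, hfix⟩
  have hstab := stab_labels_mem_Q hgG hfix
  choose gl hgl using fun v : V X => exists_hasLabel hgG.1 v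
  set f : X → Equiv.Perm X := fun a => gl [a] with hf
  set t := portraitEquiv (levelOneLabels f) with ht
  have htA : t ∈ AutT X := portraitEquiv_mem_AutT _
  set k := t⁻¹ * g with hk
  have hkA : k ∈ AutT X := mul_mem (inv_mem htA) hgG.1
  have h1 : ∀ a : X, t [a] = [a] := by
    intro a
    have := portraitFun_concat (levelOneLabels f) [] a
    simpa [ht, portraitEquiv_apply, portraitFun_nil, levelOneLabels_nil] using this
  have h2 : ∀ a : X, t⁻¹ [a] = [a] := by
    intro a
    have := congrArg (fun z => t⁻¹ z) (h1 a)
    simpa using this.symm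
  have hkfix : ∀ a : X, k [a] = [a] := by
    intro a
    show t⁻¹ (g [a]) = [a]
    rw [hfix a, h2 a]
  have hlabtinv : ∀ w : V X, HasLabel t⁻¹ w (levelOneLabels f (t⁻¹ w))⁻¹ := by
    intro w
    have := (hasLabel_portraitEquiv (levelOneLabels f) (t⁻¹ w)).inv
    rwa [t.apply_inv_self] at this
  have hklab : ∀ (v : V X) (σ : Equiv.Perm X), HasLabel k v σ →
      σ ∈ Q ∧ (v.length ≤ 1 → σ = 1) := by
    intro v σ hσ
    have hα : HasLabel k v ((levelOneLabels f (t⁻¹ (g v)))⁻¹ * gl v) :=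
      (hgl v).comp (hlabtinv (g v))
    have hσα : σ = (levelOneLabels f (t⁻¹ (g v)))⁻¹ * gl v := hσ.unique hα
    match v with
    | [] =>
      have e1 : g ([] : V X) = [] := hgG.1.1.1
      have e2 : t⁻¹ ([] : V X) = [] := (inv_mem htA).1.1
      have e3 : gl ([] : V X) = 1 := (hgl []).unique hstab.1
      have : σ = 1 := by rw [hσα, e1, e2, levelOneLabels_nil, e3]; simp
      exact ⟨this ▸ one_mem Q, fun _ => this⟩
    | [a] =>
      have e3 : gl [a] = f a := rfl
      have : σ = 1 := by
        rw [hσα, hfix a, h2 a, levelOneLabels_single, e3]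
        simp
      exact ⟨this ▸ one_mem Q, fun _ => this⟩
    | a :: b :: u =>
      have hlen : (t⁻¹ (g (a :: b :: u))).length ≠ 1 := by
        rw [(inv_mem htA).1.length_apply, hgG.1.1.length_apply]
        simp
      have : σ = gl (a :: b :: u) := by
        rw [hσα, levelOneLabels_of_ne f hlen]; simp
      refine ⟨this ▸ hstab.2 _ _ (hgl _), fun hle => by simp at hle⟩
  refine ⟨t, Finset.mem_image.2 ⟨f, Finset.mem_univ f, rfl⟩, k, ⟨hkA, hkfix, ?_⟩, by rw [hk]; group⟩
  intro a
  refine ⟨sectionPerm k hkA [a], ⟨?_, ?_⟩, fun w => rfl⟩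
  · refine mem_GQP_of_labels_Q hQP (sectionPerm_mem_AutT hkA [a]) ?_
    intro u σ hσ
    choose kl hkl using fun v : V X => exists_hasLabel hkA v
    have : σ = kl ([a] ++ u) :=
      hσ.unique (hasLabel_sectionPerm hkA [a] u (hkl ([a] ++ u)))
    rw [this]
    exact (hklab _ _ (hkl ([a] ++ u))).1
  · intro b
    choose kl hkl using fun v : V X => exists_hasLabel hkA v
    have hl1 : kl [a] = 1 := (hklab [a] _ (hkl [a])).2 (by simp)
    show sectionMap k [a] [b] = [b]
    have h3 : sectionMap k [a] ([] ++ [b]) = sectionMap k [a] [] ++ [kl [a] b] :=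
      sectionMap_concat hkA.1 [a] [] (by simpa using hkl [a])
    simpa [sectionMap_nil hkA.1, hl1] using h3

end FinIndex

/-! ### Counting the level actions -/

section Counting

variable [Inhabited X]

/-- Extension of a truncated label assignment (by the identity). -/
noncomputable def extLabels (n : ℕ) (c : {v : V X // v.length < n} → Equiv.Perm X) :
    V X → Equiv.Perm X := by
  classical exact fun v => if h : v.length < n then c ⟨v, h⟩ else 1

/-- The level-`n` action associated with a truncated label assignment. -/
noncomputable def Phi (n : ℕ) (c : {v : V X // v.length < n} → Equiv.Perm X) :
    {v : V X // v.length = n} → V X :=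
  res n (portraitEquiv (extLabels n c))

lemma Phi_injective (n : ℕ) : Function.Injective (Phi (X := X) n) := by
  intro c c' h
  funext v
  obtain ⟨v, hv⟩ := v
  have hA := portraitEquiv_mem_AutT (extLabels n c)
  have hA' := portraitEquiv_mem_AutT (extLabels n c')
  have h1 : HasLabel (portraitEquiv (extLabels n c')) v (extLabels n c v) :=
    hasLabel_of_res_eq hA hA' h hv (hasLabel_portraitEquiv _ v)
  have h2 : extLabels n c' v = extLabels n c v :=
    (hasLabel_portraitEquiv (extLabels n c') v).unique h1
  simp only [extLabels, dif_pos hv] at h2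
  exact h2.symm

lemma Phi_eq_res {g : Equiv.Perm (V X)} (hg : g ∈ AutT X) (n : ℕ) :
    Phi n (fun v : {v : V X // v.length < n} => labelPerm g v.1) = res n g := by
  funext v
  refine eq_on_of_labels_eq (portraitEquiv_mem_AutT _) hg (n := n) ?_ v.1 (le_of_eq v.2)
  intro u hu σ hσ
  have h1 : σ = extLabels n (fun v : {v : V X // v.length < n} => labelPerm g v.1) u :=
    hσ.unique (hasLabel_portraitEquiv _ u)
  rw [h1]
  simp only [extLabels, dif_pos hu]
  exact hasLabel_labelPerm hg u

lemma piSet_AutT_eq (n : ℕ) :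
    piSet (AutT X : Set (Equiv.Perm (V X))) n = Set.range (Phi (X := X) n) := by
  ext x
  constructor
  · rintro ⟨g, hg, rfl⟩
    exact ⟨fun v => labelPerm g v.1, Phi_eq_res hg n⟩
  · rintro ⟨c, rfl⟩
    exact ⟨portraitEquiv (extLabels n c), portraitEquiv_mem_AutT _, rfl⟩

variable {Q P : Subgroup (Equiv.Perm X)}

/-- Truncated label assignments all of whose values lie in a single coset of `Q` in `P`. -/
def cosetSet (Q P : Subgroup (Equiv.Perm X)) (n : ℕ) :
    Set ({v : V X // v.length < n} → Equiv.Perm X) :=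
  {c | ∃ ρ ∈ P, ∀ v, c v * ρ⁻¹ ∈ Q}

lemma piSet_GQP_eq (hQP : Q ≤ P) (n : ℕ) :
    piSet (GQP Q P) n = Phi (X := X) n '' cosetSet Q P n := by
  classical
  ext x
  constructor
  · rintro ⟨g, hgG, rfl⟩
    refine ⟨fun v : {v : V X // v.length < n} => labelPerm g v.1, ⟨labelPerm g [], ?_, ?_⟩,
      Phi_eq_res hgG.1 n⟩
    · obtain ⟨σ, hσP, hσ⟩ := hgG.2.1 []
      rw [hσ.labelPerm_eq hgG.1]
      exact hσP
    · intro v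
      exact hgG.2.2 v.1 [] _ _ (hasLabel_labelPerm hgG.1 v.1) (hasLabel_labelPerm hgG.1 [])
  · rintro ⟨c, ⟨ρ, hρP, hc⟩, rfl⟩
    set cfull : V X → Equiv.Perm X := fun v => if h : v.length < n then c ⟨v, h⟩ else ρ
      with hcfull
    have hfull : ∀ v : V X, cfull v * ρ⁻¹ ∈ Q := by
      intro v
      by_cases h : v.length < n
      · simp only [hcfull, dif_pos h]
        exact hc ⟨v, h⟩
      · simp only [hcfull, dif_neg h]
        simpa using one_mem Q
    have hPmem : ∀ v : V X, cfull v ∈ P := by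
      intro v
      have h1 : cfull v = cfull v * ρ⁻¹ * ρ := by group
      rw [h1]
      exact mul_mem (hQP (hfull v)) hρP
    set g := portraitEquiv cfull with hgdef
    have hgG : g ∈ GQP Q P := by
      refine ⟨portraitEquiv_mem_AutT _, fun v => ⟨cfull v, hPmem v, hasLabel_portraitEquiv _ v⟩,
        ?_⟩
      intro v w σ τ hσ hτ
      have h1 : σ = cfull v := hσ.unique (hasLabel_portraitEquiv _ v)
      have h2 : τ = cfull w := hτ.unique (hasLabel_portraitEquiv _ w)
      have h3 : σ * τ⁻¹ = (cfull v * ρ⁻¹) * (cfull w * ρ⁻¹)⁻¹ := by rw [h1, h2]; group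
      rw [h3]
      exact mul_mem (hfull v) (inv_mem (hfull w))
    refine ⟨g, hgG, ?_⟩
    funext v
    refine eq_on_of_labels_eq (portraitEquiv_mem_AutT _) (portraitEquiv_mem_AutT _)
      (n := n) ?_ v.1 (le_of_eq v.2)
    intro u hu σ hσ
    have h1 : σ = cfull u := hσ.unique (hasLabel_portraitEquiv _ u)
    have h2 : cfull u = extLabels n c u := by
      simp only [hcfull, extLabels, dif_pos hu]
    rw [h1, h2]
    exact hasLabel_portraitEquiv _ u

lemma card_piSets [Fintype X] [DecidableEq X] (hQP : Q ≤ P) {n : ℕ} (hn : 0 < n) :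
    ∃ m : ℕ, n ≤ m + 1 ∧
      (piSet (AutT X : Set (Equiv.Perm (V X))) n).ncard = Nat.card (Equiv.Perm X) ^ (m + 1) ∧
      (piSet (GQP Q P) n).ncard = Nat.card ↥P * Nat.card ↥Q ^ m := by
  classical
  haveI hfin : Finite {v : V X // v.length < n} := (List.finite_length_lt X n).to_subtype
  set v₀ : {v : V X // v.length < n} := ⟨[], by simpa using hn⟩ with hv₀
  set m := Nat.card {v : {v : V X // v.length < n} // v ≠ v₀} with hm
  have hM : Nat.card {v : V X // v.length < n} = m + 1 := by
    rw [← Nat.card_congr (Equiv.optionSubtypeNe v₀), Finite.card_option]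
  have hmn : n ≤ m + 1 := by
    rw [← hM]
    have hinj : Function.Injective (fun i : Fin n =>
        (⟨List.replicate i default, by simpa using i.2⟩ : {v : V X // v.length < n})) := by
      intro i j hij
      have := congrArg (fun v : {v : V X // v.length < n} => v.1.length) hij
      simp only [List.length_replicate] at this
      exact Fin.ext this
    calc n = Nat.card (Fin n) := by simp
      _ ≤ _ := Nat.card_le_card_of_injective _ hinj
  refine ⟨m, hmn, ?_, ?_⟩
  · rw [piSet_AutT_eq, ← Set.image_univ, Set.ncard_image_of_injective _ (Phi_injective n),
      Set.ncard_univ, Nat.card_fun, hM]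
  · rw [piSet_GQP_eq hQP n, Set.ncard_image_of_injective _ (Phi_injective n),
      ← Nat.card_coe_set_eq]
    have mem1 : ∀ c : ↥(cosetSet Q P n), c.1 v₀ ∈ P := by
      rintro ⟨c, ρ, hρP, hc⟩
      show c v₀ ∈ P
      have h1 : c v₀ = c v₀ * ρ⁻¹ * ρ := by group
      rw [h1]
      exact mul_mem (hQP (hc v₀)) hρP
    have mem2 : ∀ (c : ↥(cosetSet Q P n)) (v : {v : {v : V X // v.length < n} // v ≠ v₀}),
        c.1 v.1 * (c.1 v₀)⁻¹ ∈ Q := by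
      rintro ⟨c, ρ, hρP, hc⟩ v
      show c v.1 * (c v₀)⁻¹ ∈ Q
      have h1 : c v.1 * (c v₀)⁻¹ = (c v.1 * ρ⁻¹) * (c v₀ * ρ⁻¹)⁻¹ := by group
      rw [h1]
      exact mul_mem (hc v.1) (inv_mem (hc v₀))
    have e : ↥(cosetSet Q P n) ≃
        (↥P × ({v : {v : V X // v.length < n} // v ≠ v₀} → ↥Q)) :=
      { toFun := fun c => (⟨c.1 v₀, mem1 c⟩, fun v => ⟨c.1 v.1 * (c.1 v₀)⁻¹, mem2 c v⟩)
        invFun := fun x => ⟨fun v => if h : v = v₀ then (x.1 : Equiv.Perm X)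
            else (x.2 ⟨v, h⟩ : Equiv.Perm X) * (x.1 : Equiv.Perm X),
          ⟨x.1, x.1.2, by
            intro v
            by_cases h : v = v₀
            · simpa [h] using one_mem Q
            · simpa [h, mul_inv_cancel_right] using (x.2 ⟨v, h⟩).2⟩⟩
        left_inv := by
          rintro ⟨c, hcmem⟩
          ext v
          by_cases h : v = v₀
          · simp [h]
          · simp [h, inv_mul_cancel_right]
        right_inv := by
          rintro ⟨ρ₀, q⟩
          refine Prod.ext ?_ ?_
          · exact Subtype.ext (by simp)
          · funext v
            refine Subtype.ext ?_
            simp [dif_neg v.2, mul_inv_cancel_right] }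
    rw [Nat.card_congr e, Nat.card_prod, Nat.card_fun, hm]

end Counting

lemma tendsto_ratio (A B C : ℝ) (hC : 0 < C) (s : ℕ → ℝ)
    (hs : Filter.Tendsto s Filter.atTop Filter.atTop) :
    Filter.Tendsto (fun n => (A + s n * B) / ((s n + 1) * C)) Filter.atTop
      (nhds (B / C)) := by
  have h1 : Filter.Tendsto (fun n => (s n + 1) * C) Filter.atTop Filter.atTop :=
    (Filter.tendsto_atTop_add_const_right Filter.atTop 1 hs).atTop_mul_const hC
  have h2 : Filter.Tendsto (fun n => (A - B) / ((s n + 1) * C)) Filter.atTop (nhds 0) :=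
    Filter.Tendsto.div_atTop tendsto_const_nhds h1
  have h3 : Filter.Tendsto (fun n => (A - B) / ((s n + 1) * C) + B / C) Filter.atTop
      (nhds (0 + B / C)) := h2.add tendsto_const_nhds
  rw [zero_add] at h3
  refine h3.congr' ?_
  filter_upwards [h1.eventually_gt_atTop 0] with n hn
  have hne : (s n + 1) * C ≠ 0 := ne_of_gt hn
  have hne2 : s n + 1 ≠ 0 := by
    intro h
    rw [h, zero_mul] at hne
    exact hne rfl
  field_simp
  ring

end Infra

/-- for `d ≥ 3` and `Q` transitive, `G_Q^P` is closed, self-similar,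
regular branch over its first level stabilizer, and has Hausdorff dimension
`log|Q|/log(d!) > 0`. -/
theorem stmt15 (d : ℕ) (hd : 3 ≤ d) (Q P : Subgroup (Equiv.Perm (Fin d)))
    (hQ : Q ≠ ⊥) (hQP : Q ≤ P) (hnorm : ∀ p ∈ P, ∀ q ∈ Q, p * q * p⁻¹ ∈ Q)
    (htrans : ∀ x y : Fin d, ∃ σ ∈ Q, σ x = y) :
    IsClosedSub (GQP Q P) ∧
    SelfSimilar (GQP Q P) ∧
    RegularBranchOver (GQP Q P) {g ∈ GQP Q P | ∀ a : Fin d, g [a] = [a]} ∧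
    hausdorffDim (GQP Q P) = Real.log (Nat.card Q) / Real.log (Nat.factorial d) ∧
    0 < hausdorffDim (GQP Q P) := by
  haveI : Inhabited (Fin d) := ⟨⟨0, by omega⟩⟩
  have hq2 : 1 < Nat.card ↥Q := (Subgroup.one_lt_card_iff_ne_bot Q).2 hQ
  have hp1 : 0 < Nat.card ↥P := Nat.card_pos
  have hperm : Nat.card (Equiv.Perm (Fin d)) = Nat.factorial d := by
    rw [Nat.card_eq_fintype_card, Fintype.card_perm, Fintype.card_fin]
  have hd1 : 1 < (Nat.factorial d : ℝ) := by
    have h1 : 3 ≤ Nat.factorial d := le_trans hd (Nat.self_le_factorial d)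
    exact_mod_cast lt_of_lt_of_le (by norm_num) h1
  have hq1 : 1 < ((Nat.card ↥Q : ℕ) : ℝ) := by exact_mod_cast hq2
  have hlogq : 0 < Real.log (Nat.card ↥Q) := Real.log_pos hq1
  have hlogd : 0 < Real.log (Nat.factorial d) := Real.log_pos hd1
  -- the counting data
  have key : ∀ k : ℕ, ∃ m : ℕ, (k + 1) ≤ m + 1 ∧
      (piSet (AutT (Fin d) : Set (Equiv.Perm (V (Fin d)))) (k + 1)).ncard =
        Nat.card (Equiv.Perm (Fin d)) ^ (m + 1) ∧
      (piSet (GQP Q P) (k + 1)).ncard = Nat.card ↥P * Nat.card ↥Q ^ m :=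
    fun k => card_piSets hQP k.succ_pos
  choose M hM1 hM2 hM3 using key
  set f : ℕ → ℝ := fun n =>
    Real.log ((piSet (GQP Q P) n).ncard) /
      Real.log ((piSet (AutT (Fin d) : Set (Equiv.Perm (V (Fin d)))) n).ncard) with hf
  have hfval : ∀ k : ℕ, f (k + 1) =
      (Real.log (Nat.card ↥P) + (M k : ℝ) * Real.log (Nat.card ↥Q)) /
        (((M k : ℝ) + 1) * Real.log (Nat.factorial d)) := by
    intro k
    have e1 : ((piSet (GQP Q P) (k + 1)).ncard : ℝ) =
        (Nat.card ↥P : ℝ) * (Nat.card ↥Q : ℝ) ^ M k := by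
      rw [hM3 k]; push_cast; ring
    have e2 : ((piSet (AutT (Fin d) : Set (Equiv.Perm (V (Fin d)))) (k + 1)).ncard : ℝ) =
        ((Nat.factorial d : ℕ) : ℝ) ^ (M k + 1) := by
      rw [hM2 k, hperm]; push_cast; ring
    have hpne : ((Nat.card ↥P : ℕ) : ℝ) ≠ 0 := by positivity
    have hqne : ((Nat.card ↥Q : ℕ) : ℝ) ^ M k ≠ 0 := by positivity
    rw [hf]
    simp only
    rw [e1, e2, Real.log_mul hpne hqne, Real.log_pow, Real.log_pow]
    push_cast
    ring_nf
  have hs : Filter.Tendsto (fun k => (M k : ℝ)) Filter.atTop Filter.atTop := by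
    refine tendsto_atTop_mono (fun k => ?_) tendsto_natCast_atTop_atTop
    have : k ≤ M k := by have := hM1 k; omega
    exact_mod_cast this
  have htend1 : Filter.Tendsto (fun k => f (k + 1)) Filter.atTop
      (nhds (Real.log (Nat.card ↥Q) / Real.log (Nat.factorial d))) := by
    have := tendsto_ratio (Real.log (Nat.card ↥P)) (Real.log (Nat.card ↥Q))
      (Real.log (Nat.factorial d)) hlogd (fun k => (M k : ℝ)) hs
    refine this.congr (fun k => ?_)
    exact (hfval k).symm
  have htend : Filter.Tendsto f Filter.atTop
      (nhds (Real.log (Nat.card ↥Q) / Real.log (Nat.factorial d))) :=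
    (Filter.tendsto_add_atTop_iff_nat 1).1 htend1
  have hdim : hausdorffDim (GQP Q P) = Real.log (Nat.card ↥Q) / Real.log (Nat.factorial d) := by
    rw [hausdorffDim]
    exact htend.liminf_eq
  refine ⟨isClosedSub_GQP, selfSimilar_GQP,
    ⟨levelTransitive_GQP hQP htrans, Set.sep_subset _ _, geomProd_subset_stab hQP,
      finiteIndex_geomProd_stab hQP, finiteIndex_stab_GQP hnorm⟩, hdim, ?_⟩
  rw [hdim]
  exact div_pos hlogq hlogd

end TreePaper
end

section
/- Let d ≥ 3, let T be the d-regular rooted tree and let Q, P be subgroups of Sym(d) with 1 ≠ Q normal in P. Then G_Q^P is level-transitive if and only if Q acts transitively on {1,…,d}. -/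
open Filter Polynomial

namespace TreePaper

variable {X : Type*}

/-! ### Auxiliary machinery for Statement 16 -/

/-- Apply a portrait (labelling of vertices by permutations) to a word. -/
def applyP (ℓ : List X → Equiv.Perm X) : List X → List X
  | [] => []
  | a :: rest => ℓ [] a :: applyP (fun u => ℓ (a :: u)) rest

/-- Inverse of `applyP`. -/
def applyInvP (ℓ : List X → Equiv.Perm X) : List X → List X
  | [] => []
  | b :: rest => (ℓ [])⁻¹ b :: applyInvP (fun u => ℓ ((ℓ [])⁻¹ b :: u)) rest

lemma applyP_left_inv (l : List X) : ∀ ℓ, applyInvP ℓ (applyP ℓ l) = l := by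
  induction l with
  | nil => intro ℓ; rfl
  | cons a rest ih =>
    intro ℓ
    simp [applyP, applyInvP, Equiv.symm_apply_apply, ih]

lemma applyP_right_inv (l : List X) : ∀ ℓ, applyP ℓ (applyInvP ℓ l) = l := by
  induction l with
  | nil => intro ℓ; rfl
  | cons b rest ih =>
    intro ℓ
    simp [applyP, applyInvP, Equiv.apply_symm_apply, ih]

/-- The tree automorphism with portrait `ℓ`. -/
def permOf (ℓ : List X → Equiv.Perm X) : Equiv.Perm (V X) :=
  ⟨applyP ℓ, applyInvP ℓ, fun l => applyP_left_inv l ℓ, fun l => applyP_right_inv l ℓ⟩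

lemma applyP_append (v : List X) : ∀ (ℓ : List X → Equiv.Perm X) (a : X),
    applyP ℓ (v ++ [a]) = applyP ℓ v ++ [ℓ v a] := by
  induction v with
  | nil => intro ℓ a; rfl
  | cons c v' ih =>
    intro ℓ a
    simp [applyP, ih]

lemma applyInvP_append (v : List X) : ∀ (ℓ : List X → Equiv.Perm X) (b : X),
    ∃ x, applyInvP ℓ (v ++ [b]) = applyInvP ℓ v ++ [x] := by
  induction v with
  | nil => intro ℓ b; exact ⟨(ℓ [])⁻¹ b, rfl⟩
  | cons c v' ih =>
    intro ℓ b
    obtain ⟨x, hx⟩ := ih (fun u => ℓ ((ℓ [])⁻¹ c :: u)) b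
    exact ⟨x, by simpa [applyInvP] using hx⟩

lemma permOf_mem_AutT (ℓ : List X → Equiv.Perm X) : permOf ℓ ∈ AutT X := by
  refine ⟨⟨rfl, fun v a => ⟨ℓ v a, applyP_append v ℓ a⟩⟩, ?_⟩
  refine ⟨rfl, fun v b => ?_⟩
  obtain ⟨x, hx⟩ := applyInvP_append v ℓ b
  exact ⟨x, hx⟩

lemma permOf_hasLabel (ℓ : List X → Equiv.Perm X) (v : V X) :
    HasLabel (permOf ℓ) v (ℓ v) :=
  fun a => applyP_append v ℓ a

lemma hasLabel_unique {g : Equiv.Perm (V X)} {v : V X} {σ τ : Equiv.Perm X}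
    (hσ : HasLabel g v σ) (hτ : HasLabel g v τ) : σ = τ := by
  ext a
  have := (hσ a).symm.trans (hτ a)
  have := List.append_cancel_left this
  simpa using this

lemma permOf_mem_GQP {Q P : Subgroup (Equiv.Perm X)} (hQP : Q ≤ P)
    (ℓ : List X → Equiv.Perm X) (hℓ : ∀ u, ℓ u ∈ Q) : permOf ℓ ∈ GQP Q P := by
  refine ⟨permOf_mem_AutT ℓ, fun v => ⟨ℓ v, hQP (hℓ v), permOf_hasLabel ℓ v⟩, ?_⟩
  intro v w σ τ hσ hτ
  rw [hasLabel_unique hσ (permOf_hasLabel ℓ v), hasLabel_unique hτ (permOf_hasLabel ℓ w)]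
  exact Q.mul_mem (hℓ v) (Q.inv_mem (hℓ w))

/-- Portrait used to map a word `v` to a word `w`. -/
def portP [DecidableEq X] (c : X → X → Equiv.Perm X) :
    List X → List X → List X → Equiv.Perm X
  | a :: _, b :: _, [] => c a b
  | a :: v, _ :: w, x :: u => if x = a then portP c v w u else 1
  | _, _, _ => 1

lemma portP_mem [DecidableEq X] {Q : Subgroup (Equiv.Perm X)}
    (c : X → X → Equiv.Perm X) (hc : ∀ a b, c a b ∈ Q) :
    ∀ (u v w : List X), portP c v w u ∈ Q := by
  intro u
  induction u with
  | nil =>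
    intro v w
    match v, w with
    | [], _ => exact Q.one_mem
    | _ :: _, [] => exact Q.one_mem
    | a :: _, b :: _ => exact hc a b
  | cons x u' ih =>
    intro v w
    match v, w with
    | [], _ => exact Q.one_mem
    | _ :: _, [] => exact Q.one_mem
    | a :: v', b :: w' =>
      show (if x = a then portP c v' w' u' else 1) ∈ Q
      split
      · exact ih v' w'
      · exact Q.one_mem

lemma applyP_portP [DecidableEq X] (c : X → X → Equiv.Perm X)
    (hc : ∀ a b, c a b a = b) :
    ∀ (v w : List X), v.length = w.length → applyP (portP c v w) v = w := by
  intro v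
  induction v with
  | nil =>
    intro w hw
    rw [List.length_nil] at hw
    rw [(List.length_eq_zero_iff.mp hw.symm)]
    rfl
  | cons a v' ih =>
    intro w hw
    match w with
    | [] => simp at hw
    | b :: w' =>
      have hlen : v'.length = w'.length := by simpa using hw
      have hfun : (fun u => portP c (a :: v') (b :: w') (a :: u)) = portP c v' w' := by
        funext u
        show (if a = a then portP c v' w' u else 1) = portP c v' w' u
        simp
      show portP c (a :: v') (b :: w') [] a ::
        applyP (fun u => portP c (a :: v') (b :: w') (a :: u)) v' = b :: w'
      rw [hfun, ih w' hlen]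
      show c a b a :: w' = b :: w'
      rw [hc a b]


/-- `G_Q^P` is level-transitive iff `Q` is transitive on `{1,…,d}`. -/
theorem stmt16 (d : ℕ) (hd : 3 ≤ d) (Q P : Subgroup (Equiv.Perm (Fin d)))
    (hQ : Q ≠ ⊥) (hQP : Q ≤ P) (hnorm : ∀ p ∈ P, ∀ q ∈ Q, p * q * p⁻¹ ∈ Q) :
    LevelTransitive (GQP Q P) ↔ ∀ x y : Fin d, ∃ σ ∈ Q, σ x = y := by
  constructor
  · intro h x y
    obtain ⟨g, hg, hgv⟩ := h [x, x] [x, y] rfl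
    obtain ⟨hAut, hlab, hcos⟩ := hg
    obtain ⟨σ, hσP, hσ⟩ := hlab []
    obtain ⟨τ, hτP, hτ⟩ := hlab [x]
    have hroot : g [] = [] := hAut.1.1
    have h1 : g [x] = [σ x] := by
      have := hσ x
      rwa [List.nil_append, hroot, List.nil_append] at this
    have h2 : g [x, x] = [σ x, τ x] := by
      have := hτ x
      rw [h1] at this
      exact this
    rw [hgv] at h2
    have hσx : σ x = x := (List.cons.injEq _ _ _ _ ▸ h2).1.symm
    have hτx : τ x = y := by
      have := (List.cons.injEq _ _ _ _ ▸ h2).2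
      simpa using this.symm
    refine ⟨τ * σ⁻¹, hcos [x] [] τ σ hτ hσ, ?_⟩
    have hinv : σ⁻¹ x = x := by
      conv_lhs => rw [← hσx]
      exact Equiv.symm_apply_apply σ x
    show τ (σ⁻¹ x) = y
    rw [hinv, hτx]
  · intro htrans v w hlen
    classical
    set c : Fin d → Fin d → Equiv.Perm (Fin d) :=
      fun a b => (htrans a b).choose with hc
    have hcQ : ∀ a b, c a b ∈ Q := fun a b => (htrans a b).choose_spec.1
    have hcab : ∀ a b, c a b a = b := fun a b => (htrans a b).choose_spec.2
    refine ⟨permOf (portP c v w), permOf_mem_GQP hQP _ (fun u => portP_mem c hcQ u v w), ?_⟩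
    exact applyP_portP c hcab v w hlen


end TreePaper
end

section
/- Let d ≥ 2 and identify {1,…,d} with ℤ/dℤ. Let I be a subgroup of (ℤ/dℤ)^×, let Q = {x ↦ x + b : b ∈ ℤ/dℤ} ≤ Sym(ℤ/dℤ) and P = {x ↦ ax + b : a ∈ I, b ∈ ℤ/dℤ} ≤ Sym(ℤ/dℤ). Then Q is a normal subgroup of P acting transitively on ℤ/dℤ, and FPP(G_Q^P) = #{a ∈ I : a − 1 ∈ (ℤ/dℤ)^×} / #I. In particular, when I = (ℤ/dℤ)^×, FPP(G_Q^P) = ∏_{p | d} (p − 2)/(p − 1) (product over the prime divisors p of d), which is positive if and only if d is odd. -/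
open Filter Polynomial

namespace TreePaper

variable {X : Type*}

namespace S18

variable {d : ℕ}

/-- forward portrait map -/
def fwd (a : ZMod d) (β : List (ZMod d) → ZMod d) : List (ZMod d) → List (ZMod d)
  | [] => []
  | x :: w => (a * x + β []) :: fwd a (fun u => β (x :: u)) w

def bwd (a : (ZMod d)ˣ) (β : List (ZMod d) → ZMod d) : List (ZMod d) → List (ZMod d)
  | [] => []
  | y :: w => (↑a⁻¹ * (y - β [])) :: bwd a (fun u => β ((↑a⁻¹ * (y - β [])) :: u)) w

lemma bwd_fwd (a : (ZMod d)ˣ) (β : List (ZMod d) → ZMod d) :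
    ∀ w, bwd a β (fwd ↑a β w) = w := by
  intro w
  induction w generalizing β with
  | nil => rfl
  | cons x w ih =>
    simp only [fwd, bwd, add_sub_cancel_right, Units.inv_mul_cancel_left]
    rw [ih]

lemma fwd_bwd (a : (ZMod d)ˣ) (β : List (ZMod d) → ZMod d) :
    ∀ w, fwd ↑a β (bwd a β w) = w := by
  intro w
  induction w generalizing β with
  | nil => rfl
  | cons y w ih =>
    simp only [fwd, bwd, Units.mul_inv_cancel_left, sub_add_cancel]
    rw [ih]

def gab (a : (ZMod d)ˣ) (β : List (ZMod d) → ZMod d) : Equiv.Perm (List (ZMod d)) :=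
  ⟨fwd ↑a β, bwd a β, bwd_fwd a β, fwd_bwd a β⟩

lemma gab_apply (a : (ZMod d)ˣ) (β) (w) : gab a β w = fwd ↑a β w := rfl

lemma gab_inv_apply (a : (ZMod d)ˣ) (β) (w) : (gab a β)⁻¹ w = bwd a β w := rfl

lemma fwd_append (a : ZMod d) (β : List (ZMod d) → ZMod d) :
    ∀ (v : List (ZMod d)) (x : ZMod d),
      fwd a β (v ++ [x]) = fwd a β v ++ [a * x + β v] := by
  intro v
  induction v generalizing β with
  | nil => intro x; rfl
  | cons z v ih =>
    intro x
    simp only [List.cons_append, fwd, List.append_eq, ih]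

lemma bwd_append (a : (ZMod d)ˣ) (β : List (ZMod d) → ZMod d) :
    ∀ (v : List (ZMod d)) (y : ZMod d),
      bwd a β (v ++ [y]) = bwd a β v ++ [↑a⁻¹ * (y - β (bwd a β v))] := by
  intro v
  induction v generalizing β with
  | nil => intro y; rfl
  | cons z v ih =>
    intro y
    simp only [List.cons_append, bwd, List.append_eq, ih]

lemma fwd_congr (a : ZMod d) :
    ∀ (w : List (ZMod d)) (β β' : List (ZMod d) → ZMod d),
      (∀ u, u.length < w.length → β u = β' u) → fwd a β w = fwd a β' w := by
  intro w
  induction w with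
  | nil => intros; rfl
  | cons x w ih =>
    intro β β' h
    simp only [fwd]
    rw [h [] (by simp), ih _ _ (fun u hu => h (x :: u) (by simpa using hu))]

end S18
namespace S18
open Equiv

variable {d : ℕ}

/-- affine permutation x ↦ a x + b -/
def aff (a : (ZMod d)ˣ) (b : ZMod d) : Equiv.Perm (ZMod d) :=
  ⟨fun x => ↑a * x + b, fun y => ↑a⁻¹ * (y - b),
   fun x => by simp [add_sub_cancel_right, Units.inv_mul_cancel_left],
   fun y => by simp [Units.mul_inv_cancel_left, sub_add_cancel]⟩

lemma aff_apply (a : (ZMod d)ˣ) (b x : ZMod d) : aff a b x = ↑a * x + b := rfl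

lemma aff_inv_apply (a : (ZMod d)ˣ) (b y : ZMod d) : (aff a b)⁻¹ y = ↑a⁻¹ * (y - b) := rfl

lemma gab_mem_AutT (a : (ZMod d)ˣ) (β) : gab a β ∈ AutT (ZMod d) := by
  refine ⟨⟨rfl, fun v x => ⟨↑a * x + β v, ?_⟩⟩,
          ⟨rfl, fun v y => ⟨↑a⁻¹ * (y - β (bwd a β v)), ?_⟩⟩⟩
  · rw [gab_apply, gab_apply]; exact fwd_append ↑a β v x
  · rw [gab_inv_apply, gab_inv_apply]; exact bwd_append a β v y

lemma hasLabel_gab (a : (ZMod d)ˣ) (β) (v : List (ZMod d)) :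
    HasLabel (gab a β) v (aff a (β v)) :=
  fun x => by rw [gab_apply, gab_apply, aff_apply]; exact fwd_append ↑a β v x

lemma label_unique {g : Equiv.Perm (V (ZMod d))} {v : V (ZMod d)}
    {σ τ : Equiv.Perm (ZMod d)} (h1 : HasLabel g v σ) (h2 : HasLabel g v τ) : σ = τ := by
  ext x
  have := (h1 x).symm.trans (h2 x)
  have := List.append_cancel_left this
  simpa using this

variable {I : Subgroup (ZMod d)ˣ} {Q P : Subgroup (Equiv.Perm (ZMod d))}

lemma gab_mem_GQP
    (hQ : ∀ σ : Equiv.Perm (ZMod d), σ ∈ Q ↔ ∃ b : ZMod d, ∀ x : ZMod d, σ x = x + b)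
    (hP : ∀ σ : Equiv.Perm (ZMod d), σ ∈ P ↔
      ∃ a ∈ I, ∃ b : ZMod d, ∀ x : ZMod d, σ x = (a : ZMod d) * x + b)
    {a : (ZMod d)ˣ} (ha : a ∈ I) (β : List (ZMod d) → ZMod d) :
    gab a β ∈ GQP Q P := by
  refine ⟨gab_mem_AutT a β, fun v => ⟨aff a (β v), (hP _).2 ⟨a, ha, β v, fun x => rfl⟩,
    hasLabel_gab a β v⟩, ?_⟩
  intro v w σ τ hσ hτ
  have hσ' := label_unique hσ (hasLabel_gab a β v)
  have hτ' := label_unique hτ (hasLabel_gab a β w)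
  subst hσ' hτ'
  refine (hQ _).2 ⟨β v - β w, fun x => ?_⟩
  show aff a (β v) ((aff a (β w))⁻¹ x) = _
  rw [aff_inv_apply, aff_apply, Units.mul_inv_cancel_left]
  ring

lemma mem_GQP_iff
    (hQ : ∀ σ : Equiv.Perm (ZMod d), σ ∈ Q ↔ ∃ b : ZMod d, ∀ x : ZMod d, σ x = x + b)
    (hP : ∀ σ : Equiv.Perm (ZMod d), σ ∈ P ↔
      ∃ a ∈ I, ∃ b : ZMod d, ∀ x : ZMod d, σ x = (a : ZMod d) * x + b)
    (g : Equiv.Perm (V (ZMod d))) :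
    g ∈ GQP Q P ↔ ∃ a, a ∈ I ∧ ∃ β, g = gab a β := by
  constructor
  · rintro ⟨hAut, hlab, hcoc⟩
    choose σ hσP hσL using hlab
    choose au hau b hb using fun v => (hP (σ v)).1 (hσP v)
    have key : ∀ v, (au v : ZMod d) = au [] := by
      intro v
      obtain ⟨c, hc⟩ := (hQ _).1 (hcoc v [] (σ v) (σ []) (hσL v) (hσL []))
      have h0 := hc (σ [] 0)
      have h1 := hc (σ [] 1)
      rw [Equiv.Perm.mul_apply, Equiv.Perm.inv_def, Equiv.symm_apply_apply] at h0 h1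
      simp only [hb] at h0 h1
      simp only [mul_zero, mul_one, zero_add] at h0 h1
      linear_combination h1 - h0
    refine ⟨au [], hau [], b, ?_⟩
    have hw : ∀ w, g w = gab (au []) b w := by
      intro w
      induction w using List.reverseRecOn with
      | nil => exact hAut.1.1
      | append_singleton v x ih =>
        rw [hσL v x, hb v x, key v, ih, gab_apply, gab_apply, fwd_append]
    exact Equiv.ext hw
  · rintro ⟨a, ha, β, rfl⟩
    exact gab_mem_GQP hQ hP ha β

end S18
namespace S18

variable {d : ℕ}

def Port (d : ℕ) : ℕ → Type
  | 0 => Unit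
  | n+1 => ZMod d × (ZMod d → Port d n)

instance portFintype (d : ℕ) [NeZero d] : ∀ n, Fintype (Port d n)
  | 0 => inferInstanceAs (Fintype Unit)
  | n+1 =>
    letI : Fintype (Port d n) := portFintype d n
    inferInstanceAs (Fintype (ZMod d × (ZMod d → Port d n)))

instance portUnique (d : ℕ) : Unique (Port d 0) := inferInstanceAs (Unique Unit)

def βext : ∀ {n : ℕ}, Port d n → List (ZMod d) → ZMod d
  | 0, _, _ => 0
  | _+1, p, [] => p.1
  | _+1, p, x :: u => βext (p.2 x) u

def trunc (β : List (ZMod d) → ZMod d) : ∀ n, Port d n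
  | 0 => ()
  | n+1 => (β [], fun x => trunc (fun u => β (x :: u)) n)

lemma βext_trunc (β : List (ZMod d) → ZMod d) :
    ∀ (n : ℕ) (u : List (ZMod d)), u.length < n → βext (trunc β n) u = β u := by
  intro n
  induction n generalizing β with
  | zero => intro u hu; omega
  | succ n ih =>
    intro u hu
    cases u with
    | nil => rfl
    | cons x u => exact ih (fun w => β (x :: w)) u (by simpa using hu)

def hasPath [NeZero d] (a : ZMod d) : ∀ {n : ℕ}, Port d n → Bool
  | 0, _ => true
  | _+1, p => decide (∃ x : ZMod d, a * x + p.1 = x ∧ hasPath a (p.2 x) = true)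

lemma fwd_cons (a : ZMod d) {n : ℕ} (p : Port d (n+1)) (x : ZMod d) (w : List (ZMod d)) :
    fwd a (βext p) (x :: w) = (a * x + p.1) :: fwd a (βext (p.2 x)) w := rfl

lemma exists_fixed_iff [NeZero d] (a : ZMod d) :
    ∀ (n : ℕ) (p : Port d n),
      (∃ w : List (ZMod d), w.length = n ∧ fwd a (βext p) w = w) ↔ hasPath a p = true := by
  intro n
  induction n with
  | zero =>
    intro p
    constructor
    · intro _; rfl
    · intro _; exact ⟨[], rfl, rfl⟩
  | succ n ih =>
    intro p
    rw [hasPath, decide_eq_true_eq]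
    constructor
    · rintro ⟨w, hl, hw⟩
      cases w with
      | nil => simp at hl
      | cons x w =>
        rw [fwd_cons] at hw
        have h1 : a * x + p.1 = x := (List.cons.injEq _ _ _ _ ▸ hw).1
        have h2 : fwd a (βext (p.2 x)) w = w := (List.cons.injEq _ _ _ _ ▸ hw).2
        have h1' : a * x + p.1 = x := by
          have := hw; rw [List.cons.injEq] at this; exact this.1 ▸ h1
        refine ⟨x, h1, (ih (p.2 x)).1 ⟨w, by simpa using hl, ?_⟩⟩
        rw [List.cons.injEq] at hw
        rw [hw.1] at hw ⊢
        exact hw.2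
    · rintro ⟨x, hx, hp⟩
      obtain ⟨w, hl, hw⟩ := (ih (p.2 x)).2 hp
      exact ⟨x :: w, by simp [hl], by rw [fwd_cons, hx, hw]⟩

lemma fwd_inj :
    ∀ (n : ℕ) (a a' : ZMod d) (p p' : Port d n),
      (∀ w : List (ZMod d), w.length = n → fwd a (βext p) w = fwd a' (βext p') w) →
      p = p' ∧ (1 ≤ n → a = a') := by
  intro n
  induction n with
  | zero => intro a a' p p' _; exact ⟨Subsingleton.elim _ _, by omega⟩
  | succ n ih =>
    intro a a' p p' h
    have hw : ∀ (x : ZMod d) (w : List (ZMod d)), w.length = n →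
        (a * x + p.1) :: fwd a (βext (p.2 x)) w = (a' * x + p'.1) :: fwd a' (βext (p'.2 x)) w := by
      intro x w hwl
      rw [← fwd_cons, ← fwd_cons]
      exact h (x :: w) (by simp [hwl])
    have hhead : ∀ x : ZMod d, a * x + p.1 = a' * x + p'.1 := by
      intro x
      have := hw x (List.replicate n 0) List.length_replicate
      rw [List.cons.injEq] at this
      exact this.1
    have hb : p.1 = p'.1 := by have := hhead 0; simpa using this
    have ha : a = a' := by have := hhead 1; simp [hb] at this; linear_combination this
    have htail : ∀ x : ZMod d, p.2 x = p'.2 x := by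
      intro x
      refine (ih a a' (p.2 x) (p'.2 x) ?_).1
      intro w hwl
      have := hw x w hwl
      rw [List.cons.injEq] at this
      exact this.2
    exact ⟨Prod.ext hb (funext htail), fun _ => ha⟩

end S18
namespace S18

variable {d : ℕ} {I : Subgroup (ZMod d)ˣ} {Q P : Subgroup (Equiv.Perm (ZMod d))}

variable (I) in
def Φ [NeZero d] (n : ℕ) (q : ↥I × Port d n) : {v : V (ZMod d) // v.length = n} → V (ZMod d) :=
  res n (gab (q.1 : (ZMod d)ˣ) (βext q.2))

lemma Φ_apply [NeZero d] (n : ℕ) (q : ↥I × Port d n) (v : {v : V (ZMod d) // v.length = n}) :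
    Φ I n q v = fwd ((q.1 : (ZMod d)ˣ) : ZMod d) (βext q.2) v.1 := rfl

lemma piSet_eq [NeZero d]
    (hQ : ∀ σ : Equiv.Perm (ZMod d), σ ∈ Q ↔ ∃ b : ZMod d, ∀ x : ZMod d, σ x = x + b)
    (hP : ∀ σ : Equiv.Perm (ZMod d), σ ∈ P ↔
      ∃ a ∈ I, ∃ b : ZMod d, ∀ x : ZMod d, σ x = (a : ZMod d) * x + b)
    (n : ℕ) : piSet (GQP Q P) n = Set.range (Φ I n) := by
  ext f
  constructor
  · rintro ⟨g, hg, rfl⟩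
    obtain ⟨a, ha, β, rfl⟩ := (mem_GQP_iff hQ hP g).1 hg
    refine ⟨⟨⟨a, ha⟩, trunc β n⟩, ?_⟩
    funext v
    rw [Φ_apply]
    show _ = fwd ((a : (ZMod d)ˣ) : ZMod d) β v.1
    exact fwd_congr _ _ _ _ (fun u hu => βext_trunc β n u (by rw [v.2] at hu; exact hu))
  · rintro ⟨q, rfl⟩
    exact ⟨gab q.1 (βext q.2), gab_mem_GQP hQ hP q.1.2 _, rfl⟩

lemma Φ_inj [NeZero d] {n : ℕ} (hn : 1 ≤ n) : Function.Injective (Φ I n) := by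
  intro q q' h
  have h' : ∀ w : List (ZMod d), w.length = n →
      fwd ((q.1 : (ZMod d)ˣ) : ZMod d) (βext q.2) w
        = fwd ((q'.1 : (ZMod d)ˣ) : ZMod d) (βext q'.2) w := by
    intro w hw
    have := congrFun h ⟨w, hw⟩
    rwa [Φ_apply, Φ_apply] at this
  obtain ⟨hp, ha⟩ := fwd_inj n _ _ _ _ h'
  exact Prod.ext (Subtype.ext (Units.ext (ha hn))) hp

lemma fixSet_eq [NeZero d]
    (hQ : ∀ σ : Equiv.Perm (ZMod d), σ ∈ Q ↔ ∃ b : ZMod d, ∀ x : ZMod d, σ x = x + b)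
    (hP : ∀ σ : Equiv.Perm (ZMod d), σ ∈ P ↔
      ∃ a ∈ I, ∃ b : ZMod d, ∀ x : ZMod d, σ x = (a : ZMod d) * x + b)
    (n : ℕ) :
    fixSet (GQP Q P) n
      = Φ I n '' {q | hasPath ((q.1 : (ZMod d)ˣ) : ZMod d) q.2 = true} := by
  ext f
  constructor
  · rintro ⟨hpi, v, hv⟩
    rw [piSet_eq hQ hP] at hpi
    obtain ⟨q, rfl⟩ := hpi
    refine ⟨q, ?_, rfl⟩
    rw [Φ_apply] at hv
    exact (exists_fixed_iff _ n q.2).1 ⟨v.1, v.2, hv⟩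
  · rintro ⟨q, hq, rfl⟩
    obtain ⟨w, hw, hfix⟩ := (exists_fixed_iff _ n q.2).2 hq
    refine ⟨?_, ⟨w, hw⟩, hfix⟩
    rw [piSet_eq hQ hP]
    exact ⟨q, rfl⟩

end S18
namespace S18
open Finset

variable {d : ℕ} [NeZero d]

/-- number of portraits of depth n -/
def c (d : ℕ) [NeZero d] (n : ℕ) : ℕ := Fintype.card (Port d n)

lemma c_zero : c d 0 = 1 := Fintype.card_unique

lemma c_succ (n : ℕ) : c d (n+1) = d * c d n ^ d := by
  show Fintype.card (ZMod d × (ZMod d → Port d n)) = _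
  rw [Fintype.card_prod, Fintype.card_fun, ZMod.card]
  rfl

instance portNonempty (d : ℕ) [NeZero d] : ∀ n, Nonempty (Port d n)
  | 0 => ⟨()⟩
  | n+1 => (portNonempty d n).elim fun p => ⟨(0, fun _ => p)⟩

lemma c_pos (n : ℕ) : 0 < c d n := Fintype.card_pos

/-- number of portraits of depth n admitting a fixed path -/
def NP (av : ZMod d) (n : ℕ) : ℕ := #(univ.filter fun p : Port d n => hasPath av p = true)

lemma NP_le (av : ZMod d) (n : ℕ) : NP av n ≤ c d n :=
  le_trans (card_filter_le _ _) (le_of_eq (card_univ))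

lemma NP_zero (av : ZMod d) : NP av 0 = 1 := by
  rw [NP, filter_true_of_mem (s := univ)
    (p := fun p : Port d 0 => hasPath av p = true) (fun p _ => rfl), card_univ]
  exact Fintype.card_unique

lemma NP_unit {av : ZMod d} (h : IsUnit (av - 1)) (n : ℕ) : NP av n = c d n := by
  have hall : ∀ (m : ℕ) (p : Port d m), hasPath av p = true := by
    intro m
    induction m with
    | zero => intro p; rfl
    | succ m ih =>
      intro p
      rw [hasPath, decide_eq_true_eq]
      refine ⟨↑h.unit⁻¹ * (-p.1), ?_, ih _⟩
      have h1 : (↑h.unit : ZMod d) * (↑h.unit⁻¹ * (-p.1)) = -p.1 :=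
        Units.mul_inv_cancel_left _ _
      rw [IsUnit.unit_spec] at h1
      linear_combination h1
  rw [NP, filter_true_of_mem (s := univ)
    (p := fun p : Port d n => hasPath av p = true) (fun p _ => hall n p), card_univ]
  rfl

end S18
namespace S18
open Finset

variable {d : ℕ} [NeZero d]

def kerC (d : ℕ) [NeZero d] (av : ZMod d) : ℕ :=
  #(univ.filter fun x : ZMod d => (av - 1) * x = 0)

def Sb (av b : ZMod d) : Finset (ZMod d) := univ.filter fun x => av * x + b = x

lemma mem_Sb {av b x : ZMod d} : x ∈ Sb av b ↔ av * x + b = x := by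
  simp [Sb]

def RC (d : ℕ) [NeZero d] (av : ZMod d) : ℕ :=
  #(univ.filter fun b : ZMod d => (Sb av b).Nonempty)

lemma card_Sb_of_nonempty {av b : ZMod d} (h : (Sb av b).Nonempty) :
    #(Sb av b) = kerC d av := by
  obtain ⟨x₀, hx₀⟩ := h
  rw [mem_Sb] at hx₀
  symm
  apply Finset.card_bij (fun (y : ZMod d) _ => x₀ + y)
  · intro y hy
    have hy' : (av - 1) * y = 0 := (mem_filter.1 hy).2
    rw [mem_Sb]
    linear_combination hx₀ + hy'
  · intro y₁ _ y₂ _ h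
    exact add_left_cancel h
  · intro x hx
    rw [mem_Sb] at hx
    refine ⟨x - x₀, mem_filter.2 ⟨mem_univ _, by linear_combination hx - hx₀⟩, by ring⟩

lemma RC_mul_kerC (av : ZMod d) : RC d av * kerC d av = d := by
  have hmem : ∀ x ∈ (univ : Finset (ZMod d)), (x - av * x) ∈
      univ.filter fun b => (Sb av b).Nonempty := by
    intro x _
    exact mem_filter.2 ⟨mem_univ _, ⟨x, mem_Sb.2 (by ring)⟩⟩
  have h := card_eq_sum_card_fiberwise hmem
  rw [card_univ, ZMod.card] at h
  have hfib : ∀ b ∈ univ.filter (fun b => (Sb av b).Nonempty),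
      #(univ.filter fun x : ZMod d => x - av * x = b) = kerC d av := by
    intro b hb
    have : (univ.filter fun x : ZMod d => x - av * x = b) = Sb av b := by
      ext x
      simp only [mem_filter, mem_univ, true_and, mem_Sb]
      constructor
      · intro h'; linear_combination -h'
      · intro h'; linear_combination -h'
    rw [this, card_Sb_of_nonempty (mem_filter.1 hb).2]
  rw [Finset.sum_congr rfl hfib, Finset.sum_const, smul_eq_mul] at h
  exact h.symm

lemma two_le_kerC {av : ZMod d} (h : ¬ IsUnit (av - 1)) : 2 ≤ kerC d av := by
  by_contra h2
  push_neg at h2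
  have h0 : (0 : ZMod d) ∈ univ.filter fun x : ZMod d => (av - 1) * x = 0 :=
    mem_filter.2 ⟨mem_univ _, mul_zero _⟩
  have h1 : 1 ≤ kerC d av := card_pos.2 ⟨0, h0⟩
  have hk : kerC d av = 1 := by omega
  obtain ⟨z, hz⟩ := Finset.card_eq_one.1 hk
  have hz0 : z = 0 := by
    have := h0; rw [hz] at this; exact (Finset.mem_singleton.1 this).symm
  have hker : ∀ w : ZMod d, (av - 1) * w = 0 → w = 0 := by
    intro w hw
    have : w ∈ univ.filter fun x : ZMod d => (av - 1) * x = 0 :=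
      mem_filter.2 ⟨mem_univ _, hw⟩
    rw [hz, hz0] at this
    simpa using this
  have hinj : Function.Injective (fun x : ZMod d => (av - 1) * x) := by
    intro x y hxy
    have : (av - 1) * (x - y) = 0 := by
      simp only at hxy
      linear_combination hxy
    exact sub_eq_zero.1 (hker _ this)
  have hsurj := Finite.injective_iff_surjective.1 hinj
  obtain ⟨x, hx⟩ := hsurj 1
  exact h (IsUnit.of_mul_eq_one _ hx)

lemma kerC_le (av : ZMod d) : kerC d av ≤ d := by
  refine le_trans (card_filter_le _ _) ?_
  rw [card_univ, ZMod.card]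

end S18
namespace S18
open Finset

variable {d : ℕ} [NeZero d]

lemma card_fun_port (n : ℕ) : Fintype.card (ZMod d → Port d n) = c d n ^ d := by
  rw [Fintype.card_fun, ZMod.card]; rfl

lemma eBlem (av : ZMod d) (n : ℕ) : ∀ b : ZMod d,
    #(univ.filter fun t : ZMod d → Port d n =>
      ∃ x, av * x + b = x ∧ hasPath av (t x) = true)
    = c d n ^ d - (c d n - NP av n) ^ #(Sb av b) * c d n ^ (d - #(Sb av b)) := by
  classical
  intro b
  set Bad : Finset (Port d n) := univ.filter fun p => ¬ hasPath av p = true with hBad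
  have hBadcard : #Bad = c d n - NP av n := by
    have h := card_filter_add_card_filter_not
      (s := (univ : Finset (Port d n))) (p := fun p => hasPath av p = true)
    rw [card_univ] at h
    have h2 : NP av n + #Bad = c d n := h
    omega
  have hU : (univ.filter fun t : ZMod d → Port d n =>
      ¬ ∃ x, av * x + b = x ∧ hasPath av (t x) = true)
      = Fintype.piFinset (fun x : ZMod d => if av * x + b = x then Bad else univ) := by
    ext t
    simp only [mem_filter, mem_univ, true_and, Fintype.mem_piFinset, not_exists, not_and]
    constructor
    · intro h x
      by_cases hx : av * x + b = x
      · rw [if_pos hx]; exact mem_filter.2 ⟨mem_univ _, h x hx⟩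
      · rw [if_neg hx]; exact mem_univ _
    · intro h x hx
      have := h x; rw [if_pos hx] at this
      exact (mem_filter.1 this).2
  have hscard : #(univ.filter fun x : ZMod d => av * x + b = x) = #(Sb av b) := rfl
  have hnegcard : #(univ.filter fun x : ZMod d => ¬ av * x + b = x) = d - #(Sb av b) := by
    have h := card_filter_add_card_filter_not
      (s := (univ : Finset (ZMod d))) (p := fun x => av * x + b = x)
    rw [card_univ, ZMod.card] at h
    rw [hscard] at h
    omega
  have hUcard : #(Fintype.piFinset (fun x : ZMod d => if av * x + b = x then Bad else univ))
      = (c d n - NP av n) ^ #(Sb av b) * c d n ^ (d - #(Sb av b)) := by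
    rw [Fintype.card_piFinset]
    calc (∏ x : ZMod d, #(if av * x + b = x then Bad else univ))
        = ∏ x : ZMod d, (if av * x + b = x then #Bad else #(univ : Finset (Port d n))) :=
          Finset.prod_congr rfl fun x _ => apply_ite _ _ _ _
      _ = _ := by
          rw [Finset.prod_ite, Finset.prod_const, Finset.prod_const, hBadcard, card_univ,
            hscard, hnegcard]
          rfl
  have h := card_filter_add_card_filter_not
    (s := (univ : Finset (ZMod d → Port d n)))
    (p := fun t => ∃ x, av * x + b = x ∧ hasPath av (t x) = true)
  rw [card_univ, card_fun_port, hU, hUcard] at h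
  have hSbd : #(Sb av b) ≤ d := by
    rw [← hscard]
    exact le_trans (card_filter_le _ _) (by rw [card_univ, ZMod.card])
  have e3 : #(Sb av b) + (d - #(Sb av b)) = d := Nat.add_sub_cancel' hSbd
  have hle : (c d n - NP av n) ^ #(Sb av b) * c d n ^ (d - #(Sb av b)) ≤ c d n ^ d := by
    calc (c d n - NP av n) ^ #(Sb av b) * c d n ^ (d - #(Sb av b))
        ≤ c d n ^ #(Sb av b) * c d n ^ (d - #(Sb av b)) :=
          Nat.mul_le_mul_right _ (Nat.pow_le_pow_left (Nat.sub_le _ _) _)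
      _ = c d n ^ (#(Sb av b) + (d - #(Sb av b))) := (pow_add _ _ _).symm
      _ = c d n ^ d := by rw [e3]
  exact Nat.eq_sub_of_add_eq h

lemma NP_succ (av : ZMod d) (n : ℕ) :
    NP av (n+1)
      = RC d av * (c d n ^ d - (c d n - NP av n) ^ kerC d av * c d n ^ (d - kerC d av)) := by
  classical
  have eA : NP av (n+1) = ∑ b : ZMod d,
      #(univ.filter fun t : ZMod d → Port d n =>
        ∃ x, av * x + b = x ∧ hasPath av (t x) = true) := by
    rw [NP, ← Fintype.card_subtype]
    have e1 : {p : Port d (n+1) // hasPath av p = true} ≃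
        Σ b : ZMod d, {t : ZMod d → Port d n //
          ∃ x, av * x + b = x ∧ hasPath av (t x) = true} := by
      refine (Equiv.subtypeEquivRight ?_).trans
        (Equiv.subtypeProdEquivSigmaSubtype
          (fun (b : ZMod d) (t : ZMod d → Port d n) =>
            ∃ x, av * x + b = x ∧ hasPath av (t x) = true))
      intro p
      rw [hasPath, decide_eq_true_eq]
    rw [Fintype.card_congr e1, Fintype.card_sigma]
    exact Finset.sum_congr rfl fun b _ => Fintype.card_subtype _
  rw [eA, Finset.sum_congr rfl (fun b _ => eBlem av n b),
    ← Finset.sum_filter_add_sum_filter_not univ (fun b => (Sb av b).Nonempty)]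
  have hz : ∑ b ∈ univ.filter (fun b : ZMod d => ¬ (Sb av b).Nonempty),
      (c d n ^ d - (c d n - NP av n) ^ #(Sb av b) * c d n ^ (d - #(Sb av b))) = 0 := by
    refine Finset.sum_eq_zero fun b hb => ?_
    have hb' := (mem_filter.1 hb).2
    rw [Finset.not_nonempty_iff_eq_empty] at hb'
    rw [hb', Finset.card_empty, pow_zero, one_mul, Nat.sub_zero, Nat.sub_self]
  rw [hz, add_zero]
  have hc : ∀ b ∈ univ.filter (fun b : ZMod d => (Sb av b).Nonempty),
      (c d n ^ d - (c d n - NP av n) ^ #(Sb av b) * c d n ^ (d - #(Sb av b)))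
      = (c d n ^ d - (c d n - NP av n) ^ kerC d av * c d n ^ (d - kerC d av)) := by
    intro b hb
    rw [card_Sb_of_nonempty (mem_filter.1 hb).2]
  rw [Finset.sum_congr rfl hc, Finset.sum_const, smul_eq_mul]
  rfl

end S18
namespace S18
open Finset Filter

lemma key_ineq (k : ℕ) (hk : 2 ≤ k) (x : ℝ) (h0 : 0 ≤ x) (h1 : x ≤ 1) :
    (1 - x^k)/(k:ℝ) ≤ (1-x) - (1-x)^2/2 := by
  have hk0 : (0:ℝ) < k := by positivity
  have hk2 : (2:ℝ) ≤ k := by exact_mod_cast hk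
  have hgeom : 1 - x^k = (1-x) * ∑ i ∈ Finset.range k, x^i := by
    have := geom_sum_mul x k
    linear_combination this
  have hsum_le : ∑ i ∈ Finset.range k, x^i ≤ 1 + ((k:ℝ)-1)*x := by
    have h01 : ∑ i ∈ Finset.range k, x^i = 1 + ∑ i ∈ Finset.Ico 1 k, x^i := by
      rw [Finset.range_eq_Ico, Finset.sum_eq_sum_Ico_succ_bot (by omega)]
      simp
    rw [h01]
    have h2 : ∑ i ∈ Finset.Ico 1 k, x^i ≤ (Finset.Ico 1 k).card • x := by
      refine Finset.sum_le_card_nsmul _ _ x fun i hi => ?_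
      have h3 : x^i ≤ x^1 := pow_le_pow_of_le_one h0 h1 (Finset.mem_Ico.1 hi).1
      rwa [pow_one] at h3
    rw [Nat.card_Ico, nsmul_eq_mul, Nat.cast_sub (by omega), Nat.cast_one] at h2
    linarith
  rw [div_le_iff₀ hk0, hgeom]
  have hx1 : (0:ℝ) ≤ 1 - x := by linarith
  have hstep : (1-x) * ∑ i ∈ Finset.range k, x^i ≤ (1-x)*(1+((k:ℝ)-1)*x) :=
    mul_le_mul_of_nonneg_left hsum_le hx1
  nlinarith [mul_nonneg (by linarith : (0:ℝ) ≤ (k:ℝ) - 2) (sq_nonneg (1-x))]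

lemma seq_bound (ρ : ℕ → ℝ) (h0 : ∀ n, 0 ≤ ρ n) (h1 : ∀ n, ρ n ≤ 1)
    (hrec : ∀ n, ρ (n+1) ≤ ρ n - (ρ n)^2/2) :
    ∀ n : ℕ, ρ (n+1) ≤ 2/((n:ℝ)+2) := by
  intro n
  induction n with
  | zero =>
    have := hrec 0
    have h00 := h0 0
    have h10 := h1 0
    norm_num
    nlinarith [sq_nonneg (1 - ρ 0)]
  | succ n ih =>
    have hr := hrec (n+1)
    have h0' := h0 (n+1)
    have hq : (0:ℝ) < (n:ℝ)+2 := by positivity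
    have hq3 : (0:ℝ) < (n:ℝ)+3 := by positivity
    have hq1 : 2/((n:ℝ)+2) ≤ 1 := by rw [div_le_one hq]; linarith
    have hmono : ρ (n+1) - (ρ (n+1))^2/2 ≤ 2/((n:ℝ)+2) - (2/((n:ℝ)+2))^2/2 := by
      nlinarith [ih, h0', hq1]
    have hfin : 2/((n:ℝ)+2) - (2/((n:ℝ)+2))^2/2 ≤ 2/((n:ℝ)+3) := by
      have e : 2/((n:ℝ)+2) - (2/((n:ℝ)+2))^2/2 = (2*(n:ℝ)+2)/(((n:ℝ)+2)^2) := by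
        field_simp
        ring
      rw [e, div_le_div_iff₀ (by positivity) hq3]
      nlinarith []
    have : ((n:ℝ)+1)+2 = (n:ℝ)+3 := by ring
    push_cast
    rw [this]
    linarith

variable {d : ℕ} [NeZero d]

lemma pow_sub_mul_le (C N s m : ℕ) (hs : s ≤ m) : (C - N)^s * C^(m-s) ≤ C^m := by
  calc (C - N)^s * C^(m-s) ≤ C^s * C^(m-s) :=
        Nat.mul_le_mul_right _ (Nat.pow_le_pow_left (Nat.sub_le _ _) _)
    _ = C^(s + (m - s)) := (pow_add _ _ _).symm
    _ = C^m := by rw [Nat.add_sub_cancel' hs]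

lemma rho_succ_le {av : ZMod d} (h : ¬ IsUnit (av - 1)) (n : ℕ) :
    (NP av (n+1) : ℝ)/(c d (n+1) : ℝ)
      ≤ (NP av n : ℝ)/(c d n : ℝ) - ((NP av n : ℝ)/(c d n : ℝ))^2/2 := by
  have hk2 : 2 ≤ kerC d av := two_le_kerC h
  have hkd : kerC d av ≤ d := kerC_le av
  have hC : (0:ℝ) < (c d n : ℝ) := by exact_mod_cast c_pos n
  have hC0 : (c d n : ℝ) ≠ 0 := ne_of_gt hC
  have hRk : (RC d av : ℝ) * (kerC d av : ℝ) = (d:ℝ) := by exact_mod_cast RC_mul_kerC av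
  have hk0 : (0:ℝ) < (kerC d av : ℝ) := by
    have : (2:ℝ) ≤ (kerC d av : ℝ) := by exact_mod_cast hk2
    linarith
  have hd0 : (0:ℝ) < (d:ℝ) := by
    have := d.pos_of_neZero
    exact_mod_cast this
  set ρn := (NP av n : ℝ)/(c d n : ℝ) with hρn
  have hρ0 : 0 ≤ ρn := div_nonneg (Nat.cast_nonneg _) (le_of_lt hC)
  have hρ1 : ρn ≤ 1 := by
    rw [hρn, div_le_one hC]
    exact_mod_cast NP_le av n
  have hCN : (c d n : ℝ) - (NP av n : ℝ) = (c d n : ℝ) * (1 - ρn) := by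
    rw [hρn]
    field_simp
  have hpow : ((c d n : ℝ) - (NP av n : ℝ))^(kerC d av) * (c d n : ℝ)^(d - kerC d av)
      = (c d n : ℝ)^d * (1-ρn)^(kerC d av) := by
    calc ((c d n : ℝ) - (NP av n : ℝ))^(kerC d av) * (c d n : ℝ)^(d - kerC d av)
        = ((c d n : ℝ)^(kerC d av) * (c d n : ℝ)^(d - kerC d av)) * (1-ρn)^(kerC d av) := by
          rw [hCN, mul_pow]; ring
      _ = (c d n : ℝ)^d * (1-ρn)^(kerC d av) := by
          rw [← pow_add, Nat.add_sub_cancel' hkd]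
  have hle1 : (c d n - NP av n)^(kerC d av) * (c d n)^(d - kerC d av) ≤ (c d n)^d :=
    pow_sub_mul_le _ _ _ _ hkd
  have hNP1 : (NP av (n+1) : ℝ)
      = (RC d av : ℝ) * ((c d n : ℝ)^d - (c d n : ℝ)^d * (1-ρn)^(kerC d av)) := by
    rw [NP_succ av n]
    push_cast [Nat.cast_sub hle1, Nat.cast_sub (NP_le av n)]
    rw [hpow]
  have hcsucc : (c d (n+1) : ℝ) = (d:ℝ) * (c d n : ℝ)^d := by
    rw [c_succ]; push_cast; ring
  rw [hNP1, hcsucc]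
  have hE : (RC d av : ℝ) * ((c d n : ℝ)^d - (c d n : ℝ)^d * (1-ρn)^(kerC d av))
      / ((d:ℝ) * (c d n : ℝ)^d) = (1 - (1-ρn)^(kerC d av))/(kerC d av : ℝ) := by
    rw [div_eq_div_iff (by positivity) (ne_of_gt hk0)]
    linear_combination ((1 - (1-ρn)^(kerC d av)) * (c d n : ℝ)^d) * hRk
  rw [hE]
  have key := key_ineq (kerC d av) hk2 (1-ρn) (by linarith) (by linarith)
  have h1 : (1:ℝ) - (1-ρn) = ρn := by ring
  rw [h1] at key
  exact key

lemma rho_tendsto (av : ZMod d) :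
    Filter.Tendsto (fun n => (NP av n : ℝ)/(c d n : ℝ)) Filter.atTop
      (nhds (if IsUnit (av - 1) then (1:ℝ) else 0)) := by
  by_cases h : IsUnit (av - 1)
  · rw [if_pos h]
    have : ∀ n, (NP av n : ℝ)/(c d n : ℝ) = 1 := by
      intro n
      rw [NP_unit h n, div_self]
      exact_mod_cast (c_pos n).ne'
    exact Tendsto.congr (fun n => (this n).symm) tendsto_const_nhds
  · rw [if_neg h]
    have h0 : ∀ n, 0 ≤ (NP av n : ℝ)/(c d n : ℝ) := fun n =>
      div_nonneg (Nat.cast_nonneg _) (Nat.cast_nonneg _)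
    have h1 : ∀ n, (NP av n : ℝ)/(c d n : ℝ) ≤ 1 := by
      intro n
      rw [div_le_one (by exact_mod_cast c_pos n)]
      exact_mod_cast NP_le av n
    have hb := seq_bound _ h0 h1 (fun n => rho_succ_le h n)
    have hg : Filter.Tendsto (fun n : ℕ => 2 * (1/((n:ℝ)+1))) Filter.atTop (nhds 0) := by
      have := tendsto_one_div_add_atTop_nhds_zero_nat.const_mul (2:ℝ)
      simpa using this
    refine tendsto_of_tendsto_of_tendsto_of_le_of_le' tendsto_const_nhds hg ?_ ?_
    · exact Filter.Eventually.of_forall h0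
    · rw [Filter.eventually_atTop]
      refine ⟨1, fun n hn => ?_⟩
      obtain ⟨m, rfl⟩ := Nat.exists_eq_add_of_le hn
      have := hb m
      have he : ((1 + m : ℕ) : ℝ) + 1 = (m:ℝ) + 2 := by push_cast; ring
      rw [he]
      calc (NP av (1+m) : ℝ)/(c d (1+m) : ℝ) = (NP av (m+1) : ℝ)/(c d (m+1) : ℝ) := by
            rw [Nat.add_comm]
        _ ≤ 2/((m:ℝ)+2) := this
        _ = 2 * (1/((m:ℝ)+2)) := by ring

end S18
namespace S18
open Finset Filter

variable {d : ℕ} [NeZero d] {I : Subgroup (ZMod d)ˣ} {Q P : Subgroup (Equiv.Perm (ZMod d))}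

lemma piSet_ncard
    (hQ : ∀ σ : Equiv.Perm (ZMod d), σ ∈ Q ↔ ∃ b : ZMod d, ∀ x : ZMod d, σ x = x + b)
    (hP : ∀ σ : Equiv.Perm (ZMod d), σ ∈ P ↔
      ∃ a ∈ I, ∃ b : ZMod d, ∀ x : ZMod d, σ x = (a : ZMod d) * x + b)
    {n : ℕ} (hn : 1 ≤ n) :
    (piSet (GQP Q P) n).ncard = Nat.card ↥I * c d n := by
  rw [piSet_eq hQ hP, ← Nat.card_coe_set_eq,
    Nat.card_range_of_injective (Φ_inj hn), Nat.card_prod]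
  congr 1
  exact Nat.card_eq_fintype_card

lemma fixSet_ncard [Fintype ↥I]
    (hQ : ∀ σ : Equiv.Perm (ZMod d), σ ∈ Q ↔ ∃ b : ZMod d, ∀ x : ZMod d, σ x = x + b)
    (hP : ∀ σ : Equiv.Perm (ZMod d), σ ∈ P ↔
      ∃ a ∈ I, ∃ b : ZMod d, ∀ x : ZMod d, σ x = (a : ZMod d) * x + b)
    {n : ℕ} (hn : 1 ≤ n) :
    (fixSet (GQP Q P) n).ncard
      = ∑ a : ↥I, NP (((a : (ZMod d)ˣ) : ZMod d)) n := by
  classical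
  rw [fixSet_eq hQ hP, Set.ncard_image_of_injective _ (Φ_inj hn),
    ← Nat.card_coe_set_eq]
  have h1 : Nat.card ↥{q : ↥I × Port d n | hasPath ((q.1 : (ZMod d)ˣ) : ZMod d) q.2 = true}
      = Fintype.card {q : ↥I × Port d n // hasPath ((q.1 : (ZMod d)ˣ) : ZMod d) q.2 = true} :=
    Nat.card_eq_fintype_card
  rw [h1, Fintype.card_congr (Equiv.subtypeProdEquivSigmaSubtype
    (fun (a : ↥I) (p : Port d n) => hasPath ((a : (ZMod d)ˣ) : ZMod d) p = true)),
    Fintype.card_sigma]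
  exact Finset.sum_congr rfl fun a _ => Fintype.card_subtype _

lemma FPP_eq [Fintype ↥I]
    (hQ : ∀ σ : Equiv.Perm (ZMod d), σ ∈ Q ↔ ∃ b : ZMod d, ∀ x : ZMod d, σ x = x + b)
    (hP : ∀ σ : Equiv.Perm (ZMod d), σ ∈ P ↔
      ∃ a ∈ I, ∃ b : ZMod d, ∀ x : ZMod d, σ x = (a : ZMod d) * x + b)
    {n : ℕ} (hn : 1 ≤ n) :
    FPPseq (GQP Q P) n
      = (∑ a : ↥I, (NP (((a : (ZMod d)ˣ) : ZMod d)) n : ℝ)/(c d n : ℝ))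
          / (Nat.card ↥I : ℝ) := by
  rw [FPPseq, piSet_ncard hQ hP hn, fixSet_ncard hQ hP hn]
  rw [← Finset.sum_div, div_div]
  push_cast
  rw [mul_comm ((Nat.card ↥I : ℝ)) ((c d n : ℝ))]

lemma main_tendsto
    (hQ : ∀ σ : Equiv.Perm (ZMod d), σ ∈ Q ↔ ∃ b : ZMod d, ∀ x : ZMod d, σ x = x + b)
    (hP : ∀ σ : Equiv.Perm (ZMod d), σ ∈ P ↔
      ∃ a ∈ I, ∃ b : ZMod d, ∀ x : ZMod d, σ x = (a : ZMod d) * x + b) :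
    Filter.Tendsto (FPPseq (GQP Q P)) Filter.atTop
      (nhds ((Nat.card {a : (ZMod d)ˣ // a ∈ I ∧ IsUnit ((a : ZMod d) - 1)} : ℝ) /
        (Nat.card ↥I : ℝ))) := by
  classical
  letI : Fintype ↥I := Fintype.ofFinite ↥I
  have hsum : Filter.Tendsto
      (fun n => ∑ a : ↥I, (NP (((a : (ZMod d)ˣ) : ZMod d)) n : ℝ)/(c d n : ℝ))
      Filter.atTop
      (nhds (∑ a : ↥I, if IsUnit (((a : (ZMod d)ˣ) : ZMod d) - 1) then (1:ℝ) else 0)) :=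
    tendsto_finset_sum _ (fun a _ => rho_tendsto _)
  have hL : (∑ a : ↥I, if IsUnit (((a : (ZMod d)ˣ) : ZMod d) - 1) then (1:ℝ) else 0)
      = (Nat.card {a : (ZMod d)ˣ // a ∈ I ∧ IsUnit ((a : ZMod d) - 1)} : ℝ) := by
    rw [Finset.sum_boole]
    have h2 : (#(univ.filter fun a : ↥I => IsUnit (((a : (ZMod d)ˣ) : ZMod d) - 1)))
        = Nat.card {a : (ZMod d)ˣ // a ∈ I ∧ IsUnit ((a : ZMod d) - 1)} := by
      rw [← Fintype.card_subtype, ← Nat.card_eq_fintype_card]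
      exact Nat.card_congr (Equiv.subtypeSubtypeEquivSubtypeInter (· ∈ I)
        (fun a => IsUnit ((a : ZMod d) - 1)))
    rw [h2]
  have hdiv := hsum.div_const (Nat.card ↥I : ℝ)
  rw [hL] at hdiv
  refine Filter.Tendsto.congr' ?_ hdiv
  rw [Filter.eventuallyEq_iff_exists_mem]
  refine ⟨{n | 1 ≤ n}, ?_, fun n hn => (FPP_eq hQ hP hn).symm⟩
  exact Filter.mem_atTop 1

end S18
namespace S18
open Finset

/-- count of `x` with `x` and `x-1` both units -/
noncomputable def J' (m : ℕ) : ℕ := Nat.card {x : ZMod m // IsUnit x ∧ IsUnit (x - 1)}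

lemma J'_one : J' 1 = 1 := by
  have hall : ∀ x : ZMod 1, IsUnit x ∧ IsUnit (x - 1) := by
    intro x
    constructor
    · exact (Subsingleton.elim (1 : ZMod 1) x) ▸ isUnit_one
    · exact (Subsingleton.elim (1 : ZMod 1) (x - 1)) ▸ isUnit_one
  rw [J', Nat.card_congr (Equiv.subtypeUnivEquiv hall), Nat.card_eq_fintype_card]
  exact ZMod.card 1

lemma isUnit_prod {M N : Type*} [CommMonoid M] [CommMonoid N] (y : M × N) :
    IsUnit y ↔ IsUnit y.1 ∧ IsUnit y.2 := by
  constructor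
  · intro h
    exact ⟨h.map (MonoidHom.fst M N), h.map (MonoidHom.snd M N)⟩
  · rintro ⟨h1, h2⟩
    obtain ⟨u, hu⟩ := isUnit_iff_exists_inv.1 h1
    obtain ⟨v, hv⟩ := isUnit_iff_exists_inv.1 h2
    exact isUnit_iff_exists_inv.2 ⟨(u, v), Prod.ext hu hv⟩

lemma J'_mul {a b : ℕ} (hab : a.Coprime b) : J' (a*b) = J' a * J' b := by
  have e := ZMod.chineseRemainder hab
  have hu : ∀ x : ZMod (a*b), IsUnit (e x) ↔ IsUnit x := by
    intro x
    constructor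
    · intro h
      have := h.map e.symm.toRingHom
      simpa using this
    · intro h
      exact h.map e.toRingHom
  have e1 : {x : ZMod (a*b) // IsUnit x ∧ IsUnit (x - 1)}
      ≃ {y : ZMod a × ZMod b // (IsUnit y.1 ∧ IsUnit (y.1 - 1)) ∧
          (IsUnit y.2 ∧ IsUnit (y.2 - 1))} := by
    refine Equiv.subtypeEquiv e.toEquiv fun x => ?_
    have h1 : IsUnit x ↔ IsUnit (e x) := (hu x).symm
    have h2 : IsUnit (x - 1) ↔ IsUnit (e x - 1) := by
      rw [← (hu (x-1)), map_sub, map_one]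
    rw [h1, h2, isUnit_prod (e x), isUnit_prod (e x - 1)]
    have ha : (e x - 1).1 = (e x).1 - 1 := by simp [Prod.fst_sub]
    have hb : (e x - 1).2 = (e x).2 - 1 := by simp [Prod.snd_sub]
    rw [ha, hb]
    tauto
  rw [J', Nat.card_congr (e1.trans (Equiv.subtypeProdEquivProd
    (p := fun s : ZMod a => IsUnit s ∧ IsUnit (s - 1))
    (q := fun t : ZMod b => IsUnit t ∧ IsUnit (t - 1)))), Nat.card_prod]
  rfl

lemma J'_prime_pow (p e : ℕ) (hp : p.Prime) (he : 0 < e) :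
    J' (p^e) = p^(e-1) * (p-2) := by
  classical
  haveI : Fact p.Prime := ⟨hp⟩
  haveI : NeZero p := ⟨hp.pos.ne'⟩
  haveI : NeZero (p^e) := ⟨pow_ne_zero _ hp.pos.ne'⟩
  set π : ZMod (p^e) →+* ZMod p := ZMod.castHom (dvd_pow_self p he.ne') (ZMod p) with hπ
  have hsurj : Function.Surjective π := ZMod.ringHom_surjective π
  have hval : ∀ x : ZMod (p^e), ((x.val : ℕ) : ZMod (p^e)) = x := by
    intro x
    rw [ZMod.natCast_val, ZMod.cast_id]
  have hπval : ∀ x : ZMod (p^e), π x = ((x.val : ℕ) : ZMod p) := by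
    intro x
    conv_lhs => rw [← hval x]
    exact map_natCast π x.val
  have hunit : ∀ x : ZMod (p^e), IsUnit x ↔ π x ≠ 0 := by
    intro x
    have h1 : IsUnit x ↔ x.val.Coprime (p^e) := by
      constructor
      · intro h; rw [← hval x] at h; exact (ZMod.isUnit_iff_coprime _ _).1 h
      · intro h; rw [← hval x]; exact (ZMod.isUnit_iff_coprime _ _).2 h
    have h2 : x.val.Coprime (p^e) ↔ ¬ p ∣ x.val := by
      rw [Nat.coprime_pow_right_iff he, Nat.coprime_comm]
      exact hp.coprime_iff_not_dvd
    have h3 : π x = 0 ↔ p ∣ x.val := by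
      rw [hπval, ZMod.natCast_eq_zero_iff]
    rw [h1, h2, ← h3]
  have hunit1 : ∀ x : ZMod (p^e), IsUnit (x - 1) ↔ π x ≠ 1 := by
    intro x
    rw [hunit (x - 1), map_sub, map_one, sub_ne_zero]
  -- fibers of π all have cardinality p^(e-1)
  have hker : ∀ y : ZMod p, #(univ.filter fun x : ZMod (p^e) => π x = y)
      = #(univ.filter fun x : ZMod (p^e) => π x = 0) := by
    intro y
    obtain ⟨x₀, hx₀⟩ := hsurj y
    symm
    apply Finset.card_bij (fun (z : ZMod (p^e)) _ => x₀ + z)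
    · intro z hz
      have hz' : π z = 0 := (mem_filter.1 hz).2
      refine mem_filter.2 ⟨mem_univ _, ?_⟩
      rw [map_add, hx₀, hz', add_zero]
    · intro z1 _ z2 _ h
      exact add_left_cancel h
    · intro x hx
      refine ⟨x - x₀, mem_filter.2 ⟨mem_univ _, ?_⟩, by ring⟩
      rw [map_sub, (mem_filter.1 hx).2, hx₀, sub_self]
  have hkercard : #(univ.filter fun x : ZMod (p^e) => π x = 0) = p^(e-1) := by
    have hmem : ∀ x ∈ (univ : Finset (ZMod (p^e))), π x ∈ (univ : Finset (ZMod p)) :=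
      fun x _ => mem_univ _
    have h := card_eq_sum_card_fiberwise hmem
    rw [card_univ, ZMod.card] at h
    rw [Finset.sum_congr rfl (fun y _ => hker y), Finset.sum_const, card_univ, ZMod.card,
      smul_eq_mul] at h
    have hpe : p^e = p * p^(e-1) := by
      conv_lhs => rw [← Nat.succ_pred_eq_of_pos he]
      rw [pow_succ', Nat.pred_eq_sub_one]
    have h2 : p * p^(e-1) = p * #(univ.filter fun x : ZMod (p^e) => π x = 0) := by
      rw [← hpe]; exact h
    exact (Nat.eq_of_mul_eq_mul_left hp.pos h2).symm
  -- main count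
  have hJ : J' (p^e) = #(univ.filter fun x : ZMod (p^e) => π x ≠ 0 ∧ π x ≠ 1) := by
    rw [J', Nat.card_eq_fintype_card, Fintype.card_subtype]
    congr 1
    apply Finset.filter_congr
    intro x _
    rw [hunit x, hunit1 x]
  have htcard : #(univ.filter fun y : ZMod p => y ≠ 0 ∧ y ≠ 1) = p - 2 := by
    have hne : (0 : ZMod p) ≠ 1 := zero_ne_one
    have he1 : (univ.filter fun y : ZMod p => y ≠ 0 ∧ y ≠ 1)
        = univ \ {0, 1} := by
      ext y
      simp [Finset.mem_sdiff, not_or]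
    rw [he1, card_sdiff_of_subset (by intro y _; exact mem_univ y), card_univ, ZMod.card]
    congr 1
    rw [card_insert_of_notMem (by simp [hne]), card_singleton]
  have hmem2 : ∀ x ∈ (univ.filter fun x : ZMod (p^e) => π x ≠ 0 ∧ π x ≠ 1),
      π x ∈ (univ.filter fun y : ZMod p => y ≠ 0 ∧ y ≠ 1) := by
    intro x hx
    exact mem_filter.2 ⟨mem_univ _, (mem_filter.1 hx).2⟩
  have h := card_eq_sum_card_fiberwise hmem2
  have hfib2 : ∀ y ∈ (univ.filter fun y : ZMod p => y ≠ 0 ∧ y ≠ 1),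
      #((univ.filter fun x : ZMod (p^e) => π x ≠ 0 ∧ π x ≠ 1).filter fun x => π x = y)
      = p^(e-1) := by
    intro y hy
    have hy' := (mem_filter.1 hy).2
    have : ((univ.filter fun x : ZMod (p^e) => π x ≠ 0 ∧ π x ≠ 1).filter fun x => π x = y)
        = univ.filter fun x : ZMod (p^e) => π x = y := by
      ext x
      simp only [mem_filter, mem_univ, true_and]
      constructor
      · tauto
      · intro hx
        exact ⟨by rw [hx]; exact hy', hx⟩
    rw [this, hker y, hkercard]
  rw [Finset.sum_congr rfl hfib2, Finset.sum_const, smul_eq_mul, htcard] at h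
  rw [hJ, h, Nat.mul_comm]

lemma J'_identity : ∀ m : ℕ, 0 < m →
    J' m * ∏ p ∈ m.primeFactors, (p-1) = m.totient * ∏ p ∈ m.primeFactors, (p-2) := by
  refine Nat.recOnPosPrimePosCoprime ?_ ?_ ?_ ?_
  · intro p n hp hn _
    rw [Nat.primeFactors_prime_pow hn.ne' hp, Finset.prod_singleton, Finset.prod_singleton,
      J'_prime_pow p n hp hn, Nat.totient_prime_pow hp hn]
    ring
  · intro h; omega
  · intro _
    rw [J'_one, Nat.totient_one, Nat.primeFactors_one]
    simp
  · intro a b ha hb hab iha ihb _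
    have hd := Nat.Coprime.disjoint_primeFactors hab
    rw [J'_mul hab, Nat.totient_mul hab, Nat.Coprime.primeFactors_mul hab,
      Finset.prod_union hd, Finset.prod_union hd]
    calc J' a * J' b * ((∏ p ∈ a.primeFactors, (p-1)) * ∏ p ∈ b.primeFactors, (p-1))
        = (J' a * ∏ p ∈ a.primeFactors, (p-1)) * (J' b * ∏ p ∈ b.primeFactors, (p-1)) := by
          ring
      _ = (a.totient * ∏ p ∈ a.primeFactors, (p-2))
            * (b.totient * ∏ p ∈ b.primeFactors, (p-2)) := by
          rw [iha (by omega), ihb (by omega)]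
      _ = a.totient * b.totient * ((∏ p ∈ a.primeFactors, (p-2))
            * ∏ p ∈ b.primeFactors, (p-2)) := by ring

end S18
namespace S18
open Finset

lemma unitsCount (d : ℕ) [NeZero d] :
    Nat.card {a : (ZMod d)ˣ // IsUnit ((a : ZMod d) - 1)} = J' d := by
  apply Nat.card_congr
  refine ⟨fun a => ⟨(a.1 : ZMod d), a.1.isUnit, a.2⟩,
    fun x => ⟨x.2.1.unit, by simpa only [IsUnit.unit_spec] using x.2.2⟩, ?_, ?_⟩
  · intro a
    apply Subtype.ext
    apply Units.ext
    simp only [IsUnit.unit_spec]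
  · intro x
    apply Subtype.ext
    simp only [IsUnit.unit_spec]

lemma ratio_eq (d : ℕ) (hd : 2 ≤ d) :
    haveI : NeZero d := ⟨by omega⟩
    (Nat.card {a : (ZMod d)ˣ // IsUnit ((a : ZMod d) - 1)} : ℝ)
      / (Nat.card (ZMod d)ˣ : ℝ)
    = ∏ p ∈ d.primeFactors, ((p:ℝ)-2)/((p:ℝ)-1) := by
  haveI : NeZero d := ⟨by omega⟩
  have hid := J'_identity d (by omega)
  have hL : ∏ p ∈ d.primeFactors, ((p:ℝ)-1) = ∏ p ∈ d.primeFactors, (((p-1 : ℕ)):ℝ) :=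
    Finset.prod_congr rfl fun p hp => by
      have := (Nat.prime_of_mem_primeFactors hp).two_le
      rw [Nat.cast_sub (by omega)]
      norm_num
  have hR : ∏ p ∈ d.primeFactors, ((p:ℝ)-2) = ∏ p ∈ d.primeFactors, (((p-2 : ℕ)):ℝ) :=
    Finset.prod_congr rfl fun p hp => by
      have := (Nat.prime_of_mem_primeFactors hp).two_le
      rw [Nat.cast_sub (by omega)]
      norm_num
  have hcast : (J' d : ℝ) * ∏ p ∈ d.primeFactors, ((p:ℝ)-1)
      = (d.totient : ℝ) * ∏ p ∈ d.primeFactors, ((p:ℝ)-2) := by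
    rw [hL, hR, ← Nat.cast_prod, ← Nat.cast_prod, ← Nat.cast_mul, ← Nat.cast_mul, hid]
  have hcard : Nat.card (ZMod d)ˣ = d.totient := by
    rw [Nat.card_eq_fintype_card, ZMod.card_units_eq_totient]
  have hphi : (0:ℝ) < (d.totient : ℝ) := by
    exact_mod_cast Nat.totient_pos.2 (by omega)
  have hprodpos : (0:ℝ) < ∏ p ∈ d.primeFactors, ((p:ℝ)-1) := by
    refine Finset.prod_pos fun p hp => ?_
    have := (Nat.prime_of_mem_primeFactors hp).two_le
    have h2 : (2:ℝ) ≤ (p:ℝ) := by exact_mod_cast this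
    linarith
  rw [unitsCount, hcard, Finset.prod_div_distrib,
    div_eq_div_iff (ne_of_gt hphi) (ne_of_gt hprodpos)]
  linear_combination hcast

lemma prod_pos_iff_odd (d : ℕ) (hd : 2 ≤ d) :
    (0 < ∏ p ∈ d.primeFactors, ((p:ℝ)-2)/((p:ℝ)-1)) ↔ Odd d := by
  constructor
  · intro h
    by_contra hodd
    rw [Nat.not_odd_iff_even] at hodd
    have h2 : 2 ∈ d.primeFactors :=
      Nat.mem_primeFactors.2 ⟨Nat.prime_two, hodd.two_dvd, by omega⟩
    have hz : ∏ p ∈ d.primeFactors, ((p:ℝ)-2)/((p:ℝ)-1) = 0 :=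
      Finset.prod_eq_zero h2 (by norm_num)
    rw [hz] at h
    exact lt_irrefl _ h
  · intro hodd
    refine Finset.prod_pos fun p hp => ?_
    have hpp := Nat.prime_of_mem_primeFactors hp
    have hpd := Nat.dvd_of_mem_primeFactors hp
    have hp2 : p ≠ 2 := by
      rintro rfl
      rw [← Nat.not_even_iff_odd] at hodd
      exact hodd (even_iff_two_dvd.2 hpd)
    have hp3 : 3 ≤ p := by
      have := hpp.two_le
      omega
    have h3 : (3:ℝ) ≤ (p:ℝ) := by exact_mod_cast hp3
    apply div_pos <;> linarith

end S18

/-- Construction 1 / Theorem `FPP(x^d+c)`: for `Q` the translations of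
`ℤ/dℤ` and `P` the affine maps `x ↦ ax + b` with `a ∈ I`, `Q` is normal and transitive
in `P` and `FPP(G_Q^P) = #{a ∈ I : a - 1 ∈ (ℤ/dℤ)ˣ}/#I`; for `I = (ℤ/dℤ)ˣ` this equals
`∏_{p ∣ d} (p-2)/(p-1)`, positive iff `d` is odd. -/
theorem stmt18 (d : ℕ) (hd : 2 ≤ d) (I : Subgroup (ZMod d)ˣ)
    (Q P : Subgroup (Equiv.Perm (ZMod d)))
    (hQ : ∀ σ : Equiv.Perm (ZMod d), σ ∈ Q ↔ ∃ b : ZMod d, ∀ x : ZMod d, σ x = x + b)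
    (hP : ∀ σ : Equiv.Perm (ZMod d), σ ∈ P ↔
      ∃ a ∈ I, ∃ b : ZMod d, ∀ x : ZMod d, σ x = (a : ZMod d) * x + b) :
    Q ≤ P ∧
    (∀ p ∈ P, ∀ q ∈ Q, p * q * p⁻¹ ∈ Q) ∧
    (∀ x y : ZMod d, ∃ σ ∈ Q, σ x = y) ∧
    Filter.Tendsto (FPPseq (GQP Q P)) Filter.atTop
      (nhds ((Nat.card {a : (ZMod d)ˣ // a ∈ I ∧ IsUnit ((a : ZMod d) - 1)} : ℝ) /
        (Nat.card I : ℝ))) ∧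
    (I = ⊤ →
      Filter.Tendsto (FPPseq (GQP Q P)) Filter.atTop
        (nhds (∏ p ∈ d.primeFactors, ((p : ℝ) - 2) / ((p : ℝ) - 1))) ∧
      (0 < ∏ p ∈ d.primeFactors, ((p : ℝ) - 2) / ((p : ℝ) - 1) ↔ Odd d)) := by
  haveI : NeZero d := ⟨by omega⟩
  refine ⟨?_, ?_, ?_, ?_, ?_⟩
  · -- Q ≤ P
    intro σ hσ
    obtain ⟨b, hb⟩ := (hQ σ).1 hσ
    exact (hP σ).2 ⟨1, I.one_mem, b, fun x => by rw [hb x]; simp⟩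
  · -- normality of Q in P
    intro p hp q hq
    obtain ⟨a, _, b, hpf⟩ := (hP p).1 hp
    obtain ⟨cq, hqf⟩ := (hQ q).1 hq
    have hpinv : ∀ x, p⁻¹ x = ↑a⁻¹ * (x - b) := by
      intro x
      apply p.injective
      rw [Equiv.Perm.inv_def, Equiv.apply_symm_apply, hpf, Units.mul_inv_cancel_left, sub_add_cancel]
    refine (hQ _).2 ⟨↑a * cq, fun x => ?_⟩
    rw [Equiv.Perm.mul_apply, Equiv.Perm.mul_apply, hpinv, hqf, hpf]
    have hu : (↑a : ZMod d) * ↑a⁻¹ = 1 := a.mul_inv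
    linear_combination (x - b) * hu
  · -- transitivity of Q
    intro x y
    refine ⟨Equiv.addRight (y - x), (hQ _).2 ⟨y - x, fun z => rfl⟩, ?_⟩
    show x + (y - x) = y
    ring
  · exact S18.main_tendsto hQ hP
  · intro hI
    subst hI
    constructor
    · have heq : ((Nat.card {a : (ZMod d)ˣ // a ∈ (⊤ : Subgroup (ZMod d)ˣ)
          ∧ IsUnit ((a : ZMod d) - 1)} : ℝ)
          / (Nat.card ↥(⊤ : Subgroup (ZMod d)ˣ) : ℝ))
          = ∏ p ∈ d.primeFactors, ((p:ℝ)-2)/((p:ℝ)-1) := by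
        have h1 : Nat.card {a : (ZMod d)ˣ // a ∈ (⊤ : Subgroup (ZMod d)ˣ)
            ∧ IsUnit ((a : ZMod d) - 1)}
            = Nat.card {a : (ZMod d)ˣ // IsUnit ((a : ZMod d) - 1)} :=
          Nat.card_congr (Equiv.subtypeEquivRight fun a => by simp)
        have h2 : Nat.card ↥(⊤ : Subgroup (ZMod d)ˣ) = Nat.card (ZMod d)ˣ :=
          Subgroup.card_top
        rw [h1, h2]
        exact S18.ratio_eq d hd
      rw [← heq]
      exact S18.main_tendsto hQ hP
    · exact S18.prod_pos_iff_odd d hd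

end TreePaper
end
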